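/- arXiv:2402.19447 — 7 statements merged into one kernel-verified Lean document; each statement's English description precedes it below -/
import Mathlib

section
/- For every n ≥ 1 and every m with 1 ≤ m ≤ n, the Catalan convolution formula holds: the sum over all tuples (j_1, ..., j_m) of positive integers with j_1 + ... + j_m = n of the product C_{j_1 - 1} · ... · C_{j_m - 1} equals (m / (2n - m)) · binomial(2n - m, n). -/
open Finset

noncomputable def F (m n : ℕ) : ℚ :=
  ∑ j ∈ (Finset.Nat.antidiagonalTuple m n).filter (fun j => ∀ i, 1 ≤ j i),
    ∏ i, (catalan (j i - 1) : ℚ)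

lemma F_zero (n : ℕ) : F 0 n = if n = 0 then 1 else 0 := by
  rcases n with _ | n <;> simp [F]

lemma F_of_lt {m n : ℕ} (h : n < m) : F m n = 0 := by
  rw [F]
  apply Finset.sum_eq_zero
  intro j hj
  exfalso
  simp only [Finset.mem_filter, Finset.Nat.mem_antidiagonalTuple] at hj
  have : (m : ℕ) ≤ ∑ i, j i := by
    calc (m : ℕ) = ∑ _i : Fin m, 1 := by simp
    _ ≤ ∑ i, j i := Finset.sum_le_sum fun i _ => hj.2 i
  omega

lemma sum_tuple_succ {M : Type*} [AddCommMonoid M] (m n : ℕ) (f : (Fin (m+1) → ℕ) → M) :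
    ∑ j ∈ Finset.Nat.antidiagonalTuple (m+1) n, f j
      = ∑ p ∈ Finset.HasAntidiagonal.antidiagonal n, ∑ x ∈ Finset.Nat.antidiagonalTuple m p.2,
          f (Fin.cons p.1 x) := by
  rw [Finset.sum_sigma']
  refine Finset.sum_nbij' (fun j => ⟨(j 0, ∑ i, Fin.tail j i), Fin.tail j⟩)
    (fun x => Fin.cons x.1.1 x.2) ?_ ?_ ?_ ?_ ?_
  · intro j hj
    simp only [Finset.Nat.mem_antidiagonalTuple, Finset.mem_sigma, Finset.HasAntidiagonal.mem_antidiagonal] at hj ⊢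
    exact ⟨by rw [← hj, Fin.sum_univ_succ]; rfl, trivial⟩
  · rintro ⟨⟨a,b⟩, x⟩ h
    simp only [Finset.mem_sigma, Finset.HasAntidiagonal.mem_antidiagonal, Finset.Nat.mem_antidiagonalTuple] at h ⊢
    rw [Fin.sum_cons, h.2, h.1]
  · intro j hj
    simp [Fin.cons_self_tail]
  · rintro ⟨⟨a,b⟩, x⟩ h
    simp only [Finset.mem_sigma, Finset.HasAntidiagonal.mem_antidiagonal, Finset.Nat.mem_antidiagonalTuple] at h
    ext : 1
    · simp [Fin.tail_cons, h.2, Prod.ext_iff]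
    · simp [Fin.tail_cons]
  · intro x hx
    simp only []
    rw [Fin.cons_self_tail]

lemma F_succ (m n : ℕ) : F (m+1) n = ∑ a ∈ range n, (catalan a : ℚ) * F m (n - 1 - a) := by
  rw [F, Finset.sum_filter, sum_tuple_succ,
    Finset.Nat.sum_antidiagonal_eq_sum_range_succ_mk,
    Finset.sum_range_succ']
  have h0 : (∑ x ∈ Finset.Nat.antidiagonalTuple m (n - 0),
      if (∀ i, 1 ≤ (Fin.cons 0 x : Fin (m+1) → ℕ) i)
        then ∏ i, (catalan ((Fin.cons 0 x : Fin (m+1) → ℕ) i - 1) : ℚ) else 0) = 0 := by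
    apply Finset.sum_eq_zero
    intro x _
    rw [if_neg]
    intro h
    simpa using h 0
  rw [h0, add_zero]
  refine Finset.sum_congr rfl fun a _ => ?_
  rw [F, Finset.sum_filter, Finset.mul_sum]
  have hsub : n - (a + 1) = n - 1 - a := by omega
  rw [hsub]
  refine Finset.sum_congr rfl fun x _ => ?_
  have hcond : (∀ i, 1 ≤ (Fin.cons (a+1) x : Fin (m+1) → ℕ) i) ↔ (∀ i, 1 ≤ x i) := by
    constructor
    · intro h i; simpa using h i.succ
    · intro h i
      refine Fin.cases ?_ ?_ i
      · simp
      · intro j; simpa using h j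
  have hprod : (∏ i, (catalan ((Fin.cons (a+1) x : Fin (m+1) → ℕ) i - 1) : ℚ))
      = (catalan a : ℚ) * ∏ i, (catalan (x i - 1) : ℚ) := by
    rw [Fin.prod_univ_succ]
    simp
  simp only [hcond, hprod]
  by_cases h : ∀ i, 1 ≤ x i <;> simp [h]

lemma triangle (N : ℕ) (f : ℕ → ℕ → ℚ) :
    ∑ a ∈ range N, ∑ i ∈ range (a+1), f i (a - i)
      = ∑ i ∈ range N, ∑ b ∈ range (N - i), f i b := by
  induction N with
  | zero => simp
  | succ N ih =>
    rw [Finset.sum_range_succ, ih, Finset.sum_range_succ (fun i => ∑ b ∈ range (N + 1 - i), f i b)]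
    have : ∀ i ∈ range N, ∑ b ∈ range (N + 1 - i), f i b
        = (∑ b ∈ range (N - i), f i b) + f i (N - i) := by
      intro i hi
      rw [Finset.mem_range] at hi
      have : N + 1 - i = (N - i) + 1 := by omega
      rw [this, Finset.sum_range_succ]
    rw [Finset.sum_congr rfl this, Finset.sum_add_distrib]
    have hN : N + 1 - N = 1 := by omega
    rw [hN, Finset.sum_range_one, Finset.sum_range_succ, Nat.sub_self]
    ring

lemma F_rec (m n : ℕ) (hn : 1 ≤ n) : F (m+1) n = F m (n-1) + F (m+2) n := by
  obtain ⟨n', rfl⟩ : ∃ n', n = n' + 1 := ⟨n - 1, by omega⟩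
  rw [F_succ, Finset.sum_range_succ' (fun a => (catalan a : ℚ) * F m (n' + 1 - 1 - a)) n']
  simp only [Nat.add_sub_cancel, Nat.sub_zero, catalan_zero, Nat.cast_one, one_mul]
  rw [add_comm]
  congr 1
  rw [F_succ]
  simp only [Nat.add_sub_cancel]
  have hR : ∀ a ∈ range (n'+1), (catalan a : ℚ) * F (m+1) (n' - a)
      = ∑ b ∈ range (n' - a), (catalan a : ℚ) * ((catalan b : ℚ) * F m (n' - a - 1 - b)) := by
    intro a ha
    rw [F_succ, Finset.mul_sum]
  rw [Finset.sum_congr rfl hR, Finset.sum_range_succ]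
  simp only [Nat.sub_self, Finset.range_zero, Finset.sum_empty, add_zero]
  have hL : ∀ a ∈ range n', (catalan (a+1) : ℚ) * F m (n' - (a+1))
      = ∑ i ∈ range (a+1), (catalan i : ℚ) * ((catalan (a - i) : ℚ)
          * F m (n' - 1 - (i + (a - i)))) := by
    intro a ha
    rw [catalan_succ']
    push_cast
    rw [Finset.Nat.sum_antidiagonal_eq_sum_range_succ_mk, Finset.sum_mul]
    refine Finset.sum_congr rfl fun i hi => ?_
    rw [Finset.mem_range] at hi
    have h1 : (i, a - i).1 = i := rfl
    have h2 : (i, a - i).2 = a - i := rfl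
    rw [h1, h2]
    have h3 : n' - 1 - (i + (a - i)) = n' - (a+1) := by omega
    rw [h3]
    ring
  rw [Finset.sum_congr rfl hL,
    triangle n' (fun i b => (catalan i : ℚ) * ((catalan b : ℚ) * F m (n' - 1 - (i + b))))]
  refine Finset.sum_congr rfl fun a ha => Finset.sum_congr rfl fun b hb => ?_
  have h3 : n' - 1 - (a + b) = n' - a - 1 - b := by omega
  rw [h3]

lemma pascal_ballot (m' n : ℕ) (h : m' + 1 < n) :
    ((m'+1 : ℕ) : ℚ) / ((2*n - (m'+1) : ℕ) : ℚ) * ((2*n - (m'+1)).choose n : ℚ)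
      = ((m' : ℕ) : ℚ) / ((2*(n-1) - m' : ℕ) : ℚ) * ((2*(n-1) - m').choose (n-1) : ℚ)
        + ((m'+2 : ℕ) : ℚ) / ((2*n - (m'+2) : ℕ) : ℚ) * ((2*n - (m'+2)).choose n : ℚ) := by
  obtain ⟨M, hM⟩ : ∃ M, 2*n - (m'+1) = M + 1 := ⟨2*n - (m'+2), by omega⟩
  have e1 : 2*(n-1) - m' = M := by omega
  have e2 : 2*n - (m'+2) = M := by omega
  rw [hM, e1, e2]
  obtain ⟨p, hp⟩ : ∃ p, n = p + 1 := ⟨n - 1, by omega⟩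
  subst hp
  simp only [Nat.add_sub_cancel]
  have hpM : p ≤ M := by omega
  have pasQ : (((M+1).choose (p+1) : ℕ) : ℚ) = (M.choose p : ℚ) + (M.choose (p+1) : ℚ) := by
    exact_mod_cast congrArg (Nat.cast : ℕ → ℚ) (Nat.choose_succ_succ M p)
  have keyQ : (M.choose (p+1) : ℚ) * ((p:ℚ)+1) = (M.choose p : ℚ) * ((M:ℚ) - p) := by
    have h := congrArg (Nat.cast : ℕ → ℚ) (Nat.choose_succ_right_eq M p)
    push_cast [Nat.cast_sub hpM] at h
    linear_combination h
  have hm'Q : ((m' : ℕ) : ℚ) = 2*(p:ℚ) - M := by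
    have : m' + M = 2*p := by omega
    have h := congrArg (Nat.cast : ℕ → ℚ) this
    push_cast at h
    linarith
  have hM0 : ((M:ℕ) : ℚ) ≠ 0 := Nat.cast_ne_zero.mpr (by omega)
  have hM1 : ((M:ℕ) : ℚ) + 1 ≠ 0 := by positivity
  rw [pasQ]
  push_cast
  rw [hm'Q]
  set A := (M.choose p : ℚ) with hA
  set B := (M.choose (p+1) : ℚ) with hB
  field_simp
  linear_combination (-2 : ℚ) * keyQ

lemma main_lemma (k : ℕ) : ∀ n m : ℕ, 2*n - m ≤ k → 1 ≤ m → m ≤ n →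
    F m n = (m : ℚ) / ((2*n - m : ℕ) : ℚ) * ((2*n - m).choose n : ℚ) := by
  induction k with
  | zero => intro n m h h1 h2; omega
  | succ k ih =>
    intro n m hk h1 h2
    obtain ⟨m', rfl⟩ : ∃ m', m = m' + 1 := ⟨m - 1, by omega⟩
    rw [F_rec m' n (by omega)]
    rcases eq_or_lt_of_le h2 with rfl | hlt
    · -- n = m' + 1
      rw [show F (m'+2) (m'+1) = 0 from F_of_lt (by omega), add_zero]
      simp only [Nat.add_sub_cancel]
      have hval : F m' m' = 1 := by
        rcases Nat.eq_zero_or_pos m' with rfl | hm'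
        · simpa using F_zero 0
        · rw [ih m' m' (by omega) hm' le_rfl]
          have h2m : 2*m' - m' = m' := by omega
          rw [h2m, Nat.choose_self]
          have : ((m' : ℕ) : ℚ) ≠ 0 := Nat.cast_ne_zero.mpr (by omega)
          field_simp
          exact Nat.cast_one
      rw [hval]
      have h2n : 2*(m'+1) - (m'+1) = m'+1 := by omega
      rw [h2n, Nat.choose_self]
      have : ((m'+1 : ℕ) : ℚ) ≠ 0 := Nat.cast_ne_zero.mpr (by omega)
      push_cast
      field_simp
    · -- m'+1 < n
      have hA : F m' (n-1)
          = ((m' : ℕ) : ℚ) / ((2*(n-1) - m' : ℕ) : ℚ) * ((2*(n-1) - m').choose (n-1) : ℚ) := by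
        rcases Nat.eq_zero_or_pos m' with rfl | hm'
        · rw [F_zero]
          rw [if_neg (by omega)]
          simp
        · exact ih (n-1) m' (by omega) hm' (by omega)
      have hB := ih n (m'+2) (by omega) (by omega) (by omega)
      rw [hA, hB, ← pascal_ballot m' n hlt]

/-- **Catalan's convolution formula**: for `1 ≤ m ≤ n`, the sum over all tuples
`(j_1, …, j_m)` of positive integers with `j_1 + … + j_m = n` of
`C_{j_1-1} ⋯ C_{j_m-1}` equals `(m / (2n - m)) · (2n - m choose n)`. -/
theorem catalan_convolution (n m : ℕ) (hn : 1 ≤ n) (hm1 : 1 ≤ m) (hmn : m ≤ n) :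
    (∑ j ∈ (Finset.Nat.antidiagonalTuple m n).filter (fun j => ∀ i, 1 ≤ j i),
        ∏ i, (catalan (j i - 1) : ℚ))
      = (m : ℚ) / ((2 * n - m : ℕ) : ℚ) * ((2 * n - m).choose n : ℚ) := by
  exact main_lemma (2*n - m) n m le_rfl hm1 hmn
end

section
/- For every n ≥ 1, the sum over m from 1 to n of (m / (2n - m)) · binomial(2n - m, n) equals the n-th Catalan number C_n. -/
open Finset

lemma sum_reindex_choose (n r : ℕ) (hn : 1 ≤ n) (hr : r ≤ n) :
    ∑ m ∈ Icc 1 n, ((2 * n - m - r).choose (n - r) : ℚ)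
      = ∑ k ∈ Icc (n - r) (2 * n - 1 - r), ((k).choose (n - r) : ℚ) := by
  refine Finset.sum_nbij' (fun m => 2 * n - m - r) (fun k => 2 * n - (k + r)) ?_ ?_ ?_ ?_ ?_ <;>
    intro a ha <;> simp only [mem_Icc] at ha ⊢ <;> first | rfl | omega

lemma sumA (n : ℕ) (hn : 1 ≤ n) :
    ∑ m ∈ Icc 1 n, (((2 * n - m).choose n : ℕ) : ℚ) = ((2 * n).choose (n + 1) : ℚ) := by
  have h := sum_reindex_choose n 0 hn (by omega)
  simp only [Nat.sub_zero] at h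
  rw [h, ← Nat.cast_sum, Nat.sum_Icc_choose]
  congr 2
  omega

lemma sumB (n : ℕ) (hn : 1 ≤ n) :
    ∑ m ∈ Icc 1 n, (((2 * n - m - 1).choose (n - 1) : ℕ) : ℚ) = ((2 * n - 1).choose n : ℚ) := by
  have h := sum_reindex_choose n 1 hn hn
  rw [h, ← Nat.cast_sum, Nat.sum_Icc_choose]
  congr 2 <;> omega

lemma two_mul_choose_pred (n : ℕ) (hn : 1 ≤ n) :
    2 * (2 * n - 1).choose n = (2 * n).choose n := by
  obtain ⟨k, rfl⟩ := Nat.exists_eq_add_of_le hn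
  have e1 : 2 * (1 + k) - 1 = 2 * k + 1 := by omega
  have e2 : 2 * (1 + k) = 2 * k + 1 + 1 := by omega
  have e3 : 1 + k = k + 1 := by omega
  rw [e1, e2, e3, Nat.choose_symm_half, Nat.choose_succ_succ' (2 * k + 1) k,
    Nat.choose_symm_half]
  ring

/-- For every `n ≥ 1`, `∑_{m=1}^{n} (m / (2n - m)) · (2n - m choose n) = C_n`. -/
theorem sum_catalan_convolution_eq_catalan (n : ℕ) (hn : 1 ≤ n) :
    (∑ m ∈ Finset.Icc 1 n, (m : ℚ) / ((2 * n - m : ℕ) : ℚ) * ((2 * n - m).choose n : ℚ))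
      = (catalan n : ℚ) := by
  have hstep : ∀ m ∈ Icc 1 n,
      (m : ℚ) / ((2 * n - m : ℕ) : ℚ) * ((2 * n - m).choose n : ℚ)
        = 2 * ((2 * n - m - 1).choose (n - 1) : ℚ) - ((2 * n - m).choose n : ℚ) := by
    intro m hm
    simp only [mem_Icc] at hm
    set a := 2 * n - m with hadef
    have ha1 : 1 ≤ a := by omega
    have key : a * (a - 1).choose (n - 1) = a.choose n * n := by
      have h := Nat.add_one_mul_choose_eq (a - 1) (n - 1)
      have h1 : a - 1 + 1 = a := by omega
      have h2 : n - 1 + 1 = n := by omega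
      rwa [h1, h2] at h
    have keyQ : (a : ℚ) * ((a - 1).choose (n - 1) : ℚ) = (a.choose n : ℚ) * n := by
      exact_mod_cast key
    have hm2n : (m : ℚ) = 2 * n - a := by
      have hh : m = 2 * n - a := by omega
      rw [hh]
      push_cast [show a ≤ 2 * n by omega]
      ring
    have hane : (a : ℚ) ≠ 0 := by
      exact_mod_cast Nat.one_le_iff_ne_zero.mp ha1
    rw [hm2n, div_mul_eq_mul_div, div_eq_iff hane]
    linear_combination -2 * keyQ
  rw [Finset.sum_congr rfl hstep, Finset.sum_sub_distrib, ← Finset.mul_sum,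
    sumB n hn, sumA n hn]
  have h1 : 2 * (((2 * n - 1).choose n : ℕ) : ℚ) = (((2 * n).choose n : ℕ) : ℚ) := by
    exact_mod_cast congrArg (Nat.cast : ℕ → ℚ) (two_mul_choose_pred n hn)
  have h2 : (((2 * n).choose (n + 1) : ℕ) : ℚ) * ((n : ℚ) + 1)
      = (((2 * n).choose n : ℕ) : ℚ) * n := by
    have h := Nat.choose_succ_right_eq (2 * n) n
    have e : 2 * n - n = n := by omega
    rw [e] at h
    exact_mod_cast h
  have h3 : ((n : ℚ) + 1) * (catalan n : ℚ) = (((2 * n).choose n : ℕ) : ℚ) := by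
    have h := succ_mul_catalan_eq_centralBinom n
    rw [Nat.centralBinom_eq_two_mul_choose] at h
    exact_mod_cast h
  have hne : (n : ℚ) + 1 ≠ 0 := by positivity
  refine mul_left_cancel₀ hne ?_
  linear_combination ((n : ℚ) + 1) * h1 - h2 - h3
end

section
/- For every n ≥ 1, the double sum over m from 1 to n and over all tuples (j_1, ..., j_m) of positive integers with j_1 + ... + j_m = n of the product C_{j_1 - 1} · ... · C_{j_m - 1} equals the n-th Catalan number C_n. Equivalently, the sum over m from 1 to n and over all tuples (i_1, ..., i_m) of nonnegative integers with i_1 + ... + i_m = n - m of C_{i_1} · ... · C_{i_m} equals C_n. -/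
open Finset

private def gcat (m n : ℕ) : ℕ := ∑ i ∈ Finset.Nat.antidiagonalTuple m n, ∏ k, catalan (i k)

private lemma gcat_zero (n : ℕ) : gcat 0 n = if n = 0 then 1 else 0 := by
  cases n with
  | zero => simp [gcat, Finset.Nat.antidiagonalTuple_zero_zero]
  | succ n => simp [gcat, Finset.Nat.antidiagonalTuple_zero_succ]

private lemma gcat_succ (m n : ℕ) :
    gcat (m + 1) n = ∑ p ∈ Finset.HasAntidiagonal.antidiagonal n, catalan p.1 * gcat m p.2 := by
  unfold gcat
  simp only [Finset.mul_sum]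
  rw [Finset.sum_sigma']
  refine Finset.sum_nbij' (i := fun (x : Fin (m+1) → ℕ) =>
      (⟨(x 0, ∑ k : Fin m, x k.succ), fun k : Fin m => x k.succ⟩ : (_ : ℕ × ℕ) × (Fin m → ℕ)))
    (j := fun x => Fin.cons x.1.1 x.2) ?_ ?_ ?_ ?_ ?_
  · intro x hx
    simp only [Finset.Nat.mem_antidiagonalTuple] at hx
    simp only [Finset.mem_sigma, Finset.HasAntidiagonal.mem_antidiagonal, Finset.Nat.mem_antidiagonalTuple]
    exact ⟨by rw [← hx, Fin.sum_univ_succ], trivial⟩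
  · rintro ⟨⟨a, b⟩, t⟩ h
    simp only [Finset.mem_sigma, Finset.HasAntidiagonal.mem_antidiagonal,
      Finset.Nat.mem_antidiagonalTuple] at h ⊢
    rw [Fin.sum_univ_succ]
    simp [h.2, h.1]
  · intro x hx
    exact Fin.cons_self_tail x
  · rintro ⟨⟨a, b⟩, t⟩ h
    simp only [Finset.mem_sigma, Finset.HasAntidiagonal.mem_antidiagonal,
      Finset.Nat.mem_antidiagonalTuple] at h
    simp [h.2]
  · intro x hx
    rw [Fin.prod_univ_succ]

private lemma vcat (s : ℕ) :
    ∑ p ∈ Finset.HasAntidiagonal.antidiagonal s, gcat p.1 p.2 = catalan s := by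
  induction s using Nat.strong_induction_on with
  | _ s ih =>
    match s with
    | 0 => simp [gcat_zero]
    | (s + 1) =>
      rw [Finset.Nat.sum_antidiagonal_succ, gcat_zero]
      simp only [Nat.succ_ne_zero, if_false, zero_add]
      have key : (∑ p ∈ Finset.HasAntidiagonal.antidiagonal s, gcat (p.1 + 1) p.2)
          = ∑ q ∈ Finset.HasAntidiagonal.antidiagonal s,
              catalan q.1 * ∑ r ∈ Finset.HasAntidiagonal.antidiagonal q.2, gcat r.1 r.2 := by
        simp only [gcat_succ, Finset.mul_sum]
        rw [Finset.sum_sigma', Finset.sum_sigma']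
        refine Finset.sum_nbij' (i := fun x => ⟨(x.2.1, x.1.1 + x.2.2), (x.1.1, x.2.2)⟩)
          (j := fun x => ⟨(x.2.1, x.1.1 + x.2.2), (x.1.1, x.2.2)⟩) ?_ ?_ ?_ ?_ ?_
        · rintro ⟨⟨k, b⟩, a, c⟩ h
          simp only [Finset.mem_sigma, Finset.HasAntidiagonal.mem_antidiagonal] at h ⊢
          exact ⟨by omega, trivial⟩
        · rintro ⟨⟨a, d⟩, k, c⟩ h
          simp only [Finset.mem_sigma, Finset.HasAntidiagonal.mem_antidiagonal] at h ⊢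
          exact ⟨by omega, trivial⟩
        · rintro ⟨⟨k, b⟩, a, c⟩ h
          simp only [Finset.mem_sigma, Finset.HasAntidiagonal.mem_antidiagonal] at h
          obtain rfl : a + c = b := h.2
          rfl
        · rintro ⟨⟨a, d⟩, k, c⟩ h
          simp only [Finset.mem_sigma, Finset.HasAntidiagonal.mem_antidiagonal] at h
          obtain rfl : k + c = d := h.2
          rfl
        · rintro ⟨⟨k, b⟩, a, c⟩ h
          rfl
      rw [key, catalan_succ']
      refine Finset.sum_congr rfl ?_
      rintro ⟨a, d⟩ h
      simp only [Finset.HasAntidiagonal.mem_antidiagonal] at h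
      rw [ih d (by omega)]

private lemma ucat (n : ℕ) (hn : 1 ≤ n) :
    (∑ m ∈ Finset.Icc 1 n, gcat m (n - m)) = catalan n := by
  have h := vcat n
  rw [Finset.Nat.sum_antidiagonal_eq_sum_range_succ_mk] at h
  have hr : Finset.range (n + 1) = insert 0 (Finset.Icc 1 n) := by
    ext x; simp; omega
  rw [hr, Finset.sum_insert (by simp)] at h
  rw [gcat_zero] at h
  simp only [Nat.sub_zero] at h
  rw [if_neg (by omega), zero_add] at h
  exact h

private lemma fcat (n m : ℕ) (hm1 : 1 ≤ m) (hm2 : m ≤ n) :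
    (∑ j ∈ (Finset.Nat.antidiagonalTuple m n).filter (fun j => ∀ i, 1 ≤ j i),
        ∏ i, catalan (j i - 1)) = gcat m (n - m) := by
  unfold gcat
  refine Finset.sum_nbij' (i := fun (x : Fin m → ℕ) (k : Fin m) => x k - 1)
    (j := fun (x : Fin m → ℕ) (k : Fin m) => x k + 1)
    ?_ ?_ ?_ ?_ ?_
  · intro x hx
    rw [Finset.mem_filter, Finset.Nat.mem_antidiagonalTuple] at hx
    rw [Finset.Nat.mem_antidiagonalTuple]
    obtain ⟨hx1, hx2⟩ := hx
    show ∑ i : Fin m, (x i - 1) = n - m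
    have hs : (∑ k, (x k - 1)) + m = n := by
      have h9 : ∑ k : Fin m, (x k - 1 + 1) = n := by
        rw [← hx1]
        refine Finset.sum_congr rfl fun k _ => ?_
        have h8 := hx2 k
        omega
      rw [Finset.sum_add_distrib] at h9
      simpa using h9
    omega
  · intro x hx
    rw [Finset.Nat.mem_antidiagonalTuple] at hx
    rw [Finset.mem_filter, Finset.Nat.mem_antidiagonalTuple]
    constructor
    · show ∑ i : Fin m, (x i + 1) = n
      rw [Finset.sum_add_distrib, hx]
      simp
      omega
    · intro k
      show 1 ≤ x k + 1
      omega
  · intro x hx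
    rw [Finset.mem_filter] at hx
    obtain ⟨hx1, hx2⟩ := hx
    funext k
    show x k - 1 + 1 = x k
    have := hx2 k
    omega
  · intro x hx
    funext k
    show x k + 1 - 1 = x k
    omega
  · intro x hx
    rfl

/-- For every `n ≥ 1`, the double sum over `m` from `1` to `n` and over all tuples of
positive integers `(j_1, …, j_m)` with `j_1 + … + j_m = n` of `C_{j_1-1} ⋯ C_{j_m-1}`
equals `C_n`; equivalently, the sum over `m` from `1` to `n` and over all tuples of
nonnegative integers `(i_1, …, i_m)` with `i_1 + … + i_m = n - m` of `C_{i_1} ⋯ C_{i_m}`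
equals `C_n`. -/
theorem double_sum_catalan_convolution (n : ℕ) (hn : 1 ≤ n) :
    (∑ m ∈ Finset.Icc 1 n,
        ∑ j ∈ (Finset.Nat.antidiagonalTuple m n).filter (fun j => ∀ i, 1 ≤ j i),
          ∏ i, catalan (j i - 1)) = catalan n ∧
    (∑ m ∈ Finset.Icc 1 n,
        ∑ i ∈ Finset.Nat.antidiagonalTuple m (n - m),
          ∏ k, catalan (i k)) = catalan n := by
  constructor
  · rw [show (∑ m ∈ Finset.Icc 1 n,
        ∑ j ∈ (Finset.Nat.antidiagonalTuple m n).filter (fun j => ∀ i, 1 ≤ j i),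
          ∏ i, catalan (j i - 1)) = ∑ m ∈ Finset.Icc 1 n, gcat m (n - m) from
      Finset.sum_congr rfl fun m hm => by
        rw [Finset.mem_Icc] at hm; exact fcat n m hm.1 hm.2]
    exact ucat n hn
  · exact ucat n hn
end

section
/- For every n ≥ 1 and every m with 1 ≤ m ≤ n, the number of elements ε of D_{2n} for which exactly m indices k ∈ {1, ..., 2n} satisfy ε(1) + ... + ε(k) = 0 equals the sum over all tuples (j_1, ..., j_m) of positive integers with j_1 + ... + j_m = n of the product C_{j_1 - 1} · ... · C_{j_m - 1}. (In the paper's language: the number of ε ∈ {-1,1}^{2n}_+ whose non-crossing counterpart has exactly m closed components is the m-fold Catalan convolution of n.) -/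
open Finset

/-- The partial sum `ε(1) + … + ε(k)` of a `{-1,1}`-valued sequence. -/
def psum {N : ℕ} (ε : Fin N → ({-1, 1} : Finset ℤ)) (k : ℕ) : ℤ :=
  ∑ h ∈ Finset.univ.filter (fun h : Fin N => (h : ℕ) < k), (ε h : ℤ)

/-- The paper's set `{-1,1}^{2n}_+`: sequences `ε : {1,…,2n} → {-1,1}` with
`ε(1)+…+ε(2n) = 0` and all partial sums `≤ 0`. -/
noncomputable def D (n : ℕ) : Finset (Fin (2 * n) → ({-1, 1} : Finset ℤ)) := by
  classical
  exact Finset.univ.filter (fun ε =>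
    psum ε (2 * n) = 0 ∧ ∀ k ∈ Finset.Icc 1 (2 * n), psum ε k ≤ 0)

namespace CatConv

def ps (l : List ℤ) (k : ℕ) : ℤ := (l.take k).sum
@[simp] lemma ps_zero (l : List ℤ) : ps l 0 = 0 := rfl
lemma ps_append (a b : List ℤ) (k : ℕ) :
    ps (a ++ b) k = ps a k + ps b (k - a.length) := by
  unfold ps; rw [List.take_append, List.sum_append]
lemma ps_cons (x : ℤ) (l : List ℤ) (k : ℕ) :
    ps (x :: l) k = if k = 0 then 0 else x + ps l (k - 1) := by
  cases k with
  | zero => simp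
  | succ k => simp [ps, List.take_succ_cons]
lemma ps_of_length_le (l : List ℤ) {k : ℕ} (h : l.length ≤ k) : ps l k = l.sum := by
  unfold ps; rw [List.take_of_length_le h]
lemma ps_parity (l : List ℤ) (hl : ∀ x ∈ l, x = -1 ∨ x = 1) :
    ∀ k, k ≤ l.length → (2 : ℤ) ∣ (ps l k - k) := by
  induction l with
  | nil => intro k hk; simp at hk; subst hk; simp
  | cons x t ih =>
    intro k hk
    cases k with
    | zero => simp
    | succ k =>
      rw [ps_cons]
      simp only [Nat.succ_ne_zero, if_false, Nat.add_sub_cancel]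
      have h1 : (2:ℤ) ∣ (ps t k - k) := ih (fun y hy => hl y (List.mem_cons_of_mem _ hy)) k
        (by simpa using hk)
      have hx : x = -1 ∨ x = 1 := hl x List.mem_cons_self
      push_cast
      have : x + ps t k - ((k:ℤ)+1) = (ps t k - k) + (x - 1) := by ring
      rw [this]
      rcases hx with h | h <;> rw [h] <;> omega
def Valid (n : ℕ) (l : List ℤ) : Prop :=
  l.length = 2 * n ∧ (∀ x ∈ l, x = -1 ∨ x = 1) ∧ l.sum = 0 ∧ ∀ k, ps l k ≤ 0
def ret (l : List ℤ) : ℕ :=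
  ((Finset.Icc 1 l.length).filter (fun k => ps l k = 0)).card
open scoped Classical in
noncomputable def fr (l : List ℤ) : ℕ :=
  if h : ∃ k, 0 < k ∧ ps l k = 0 then Nat.find h else 0
def glue (a b : List ℤ) : List ℤ := (-1) :: (a ++ (1 : ℤ) :: b)

lemma glue_ps_low {a : List ℤ} (b : List ℤ) {p : ℕ} (hA : a.length = 2 * p)
    {k : ℕ} (h1 : 1 ≤ k) (h2 : k ≤ 2 * p + 1) :
    ps (glue a b) k = -1 + ps a (k - 1) := by
  unfold glue
  rw [ps_cons, if_neg (by omega), ps_append, hA]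
  have : k - 1 - 2 * p = 0 := by omega
  rw [this, ps_zero, add_zero]

lemma glue_ps_high {a : List ℤ} (b : List ℤ) {p : ℕ} (hA : a.length = 2 * p)
    (hs : a.sum = 0) {k : ℕ} (h1 : 2 * p + 2 ≤ k) :
    ps (glue a b) k = ps b (k - (2 * p + 2)) := by
  unfold glue
  rw [ps_cons, if_neg (by omega), ps_append, hA,
    ps_of_length_le a (by omega), hs, ps_cons, if_neg (by omega)]
  have : k - 1 - 2 * p - 1 = k - (2 * p + 2) := by omega
  rw [this]; ring

lemma glue_valid {p q : ℕ} {a b : List ℤ} (ha : Valid p a) (hb : Valid q b) :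
    Valid (p + q + 1) (glue a b) := by
  obtain ⟨haL, haE, haS, haP⟩ := ha
  obtain ⟨hbL, hbE, hbS, hbP⟩ := hb
  refine ⟨by simp [glue, haL, hbL]; ring, ?_, ?_, ?_⟩
  · intro x hx
    simp only [glue, List.mem_cons, List.mem_append] at hx
    rcases hx with h | h | h | h
    · left; exact h
    · exact haE x h
    · right; exact h
    · exact hbE x h
  · simp [glue, haS, hbS]
  · intro k
    rcases Nat.eq_zero_or_pos k with h0 | h0
    · simp [h0]
    rcases le_or_gt k (2 * p + 1) with hk | hk
    · rw [glue_ps_low b haL h0 hk]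
      have := haP (k - 1); omega
    · rw [glue_ps_high b haL haS (by omega)]
      exact hbP _

lemma glue_ps_eq_zero_iff {p q : ℕ} {a b : List ℤ} (ha : Valid p a) (hb : Valid q b)
    {k : ℕ} (h1 : 1 ≤ k) :
    ps (glue a b) k = 0 ↔ 2 * p + 2 ≤ k ∧ ps b (k - (2 * p + 2)) = 0 := by
  rcases le_or_gt k (2 * p + 1) with hk | hk
  · rw [glue_ps_low b ha.1 h1 hk]
    have := ha.2.2.2 (k - 1)
    constructor
    · intro h; omega
    · intro h; omega
  · rw [glue_ps_high b ha.1 ha.2.2.1 (by omega)]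
    constructor
    · intro h; exact ⟨by omega, h⟩
    · intro h; exact h.2

lemma fr_glue {p q : ℕ} {a b : List ℤ} (ha : Valid p a) (hb : Valid q b) :
    fr (glue a b) = 2 * p + 2 := by
  classical
  have hex : ∃ k, 0 < k ∧ ps (glue a b) k = 0 := by
    refine ⟨2 * p + 2, by omega, ?_⟩
    rw [(glue_ps_eq_zero_iff ha hb (by omega) : _)]
    simp
  rw [fr, dif_pos hex]
  rw [Nat.find_eq_iff]
  constructor
  · exact ⟨by omega, by rw [(glue_ps_eq_zero_iff ha hb (by omega) : _)]; simp⟩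
  · intro t ht
    rintro ⟨ht0, ht1⟩
    rw [(glue_ps_eq_zero_iff ha hb ht0 : _)] at ht1
    omega

lemma ret_glue {p q : ℕ} {a b : List ℤ} (ha : Valid p a) (hb : Valid q b) :
    ret (glue a b) = ret b + 1 := by
  classical
  have hgL : (glue a b).length = 2 * (p + q + 1) := (glue_valid ha hb).1
  have key : ((Finset.Icc 1 (glue a b).length).filter (fun k => ps (glue a b) k = 0))
      = insert (2 * p + 2)
        (((Finset.Icc 1 b.length).filter (fun k => ps b k = 0)).image (· + (2 * p + 2))) := by
    ext k
    simp only [mem_filter, mem_Icc, mem_insert, mem_image, hgL, hb.1]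
    constructor
    · rintro ⟨⟨hk1, hk2⟩, hk3⟩
      rw [glue_ps_eq_zero_iff ha hb hk1] at hk3
      obtain ⟨hle, hz⟩ := hk3
      rcases eq_or_lt_of_le hle with h | h
      · left; omega
      · right
        refine ⟨k - (2 * p + 2), ⟨⟨by omega, by omega⟩, hz⟩, by omega⟩
    · rintro (h | ⟨k', ⟨⟨h1', h2'⟩, hz⟩, hk⟩)
      · subst h
        refine ⟨⟨by omega, by omega⟩, ?_⟩
        rw [glue_ps_eq_zero_iff ha hb (by omega)]; simp
      · subst hk
        refine ⟨⟨by omega, by omega⟩, ?_⟩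
        rw [glue_ps_eq_zero_iff ha hb (by omega)]
        refine ⟨by omega, ?_⟩
        have : k' + (2 * p + 2) - (2 * p + 2) = k' := by omega
        rw [this]; exact hz
  rw [ret, key, card_insert_of_notMem, card_image_of_injective _ (add_left_injective _)]
  · rfl
  · simp only [mem_image, mem_filter, mem_Icc]
    rintro ⟨k', ⟨⟨h1', _⟩, _⟩, hk⟩
    omega


set_option maxHeartbeats 1000000 in
lemma exists_decomp {n : ℕ} {l : List ℤ} (hv : Valid n l) (hn : 1 ≤ n) :
    ∃ j a b, 1 ≤ j ∧ j ≤ n ∧ Valid (j - 1) a ∧ Valid (n - j) b ∧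
      l = glue a b ∧ fr l = 2 * j := by
  classical
  obtain ⟨hL, hE, hS, hP⟩ := hv
  have hex : ∃ k, 0 < k ∧ ps l k = 0 :=
    ⟨2 * n, by omega, by rw [ps_of_length_le l (le_of_eq hL)]; exact hS⟩
  set r := fr l with hrdef
  have hr : fr l = Nat.find hex := by rw [fr, dif_pos hex]
  have hr0 : 0 < r := by rw [hrdef, hr]; exact (Nat.find_spec hex).1
  have hrz : ps l r = 0 := by rw [hrdef, hr]; exact (Nat.find_spec hex).2
  have hrmin : ∀ t, 0 < t → t < r → ps l t ≠ 0 := by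
    intro t ht0 htr h
    rw [hrdef, hr] at htr
    exact Nat.find_min hex htr ⟨ht0, h⟩
  have hrle : r ≤ 2 * n := by
    rw [hrdef, hr]
    exact Nat.find_min' hex ⟨by omega, by rw [ps_of_length_le l (le_of_eq hL)]; exact hS⟩
  have hreven : 2 ∣ r := by
    have := ps_parity l hE r (by omega)
    rw [hrz] at this
    have : (2:ℤ) ∣ (r : ℤ) := by omega
    exact_mod_cast this
  obtain ⟨j, hj⟩ := hreven
  have hj1 : 1 ≤ j := by omega
  have hjn : j ≤ n := by omega
  -- l is nonempty; first element is -1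
  obtain ⟨x, t, rfl⟩ : ∃ x t, l = x :: t := by
    cases l with
    | nil => simp at hL; omega
    | cons x t => exact ⟨x, t, rfl⟩
  have hx : x = -1 := by
    have h1 := hP 1
    rw [ps_cons, if_neg one_ne_zero] at h1
    simp at h1
    rcases hE x List.mem_cons_self with h | h
    · exact h
    · omega
  subst hx
  have htL : t.length = 2 * n - 1 := by simp at hL; omega
  -- prefix sums of t vs l
  have hpst : ∀ k, ps ((-1 : ℤ) :: t) (k + 1) = -1 + ps t k := by
    intro k; rw [ps_cons, if_neg (Nat.succ_ne_zero k)]; simp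
  obtain ⟨c, hc⟩ : ∃ c, 2 * j = c + 2 := ⟨2 * j - 2, by omega⟩
  -- step relation at position c+1
  have hstep : ps ((-1:ℤ) :: t) (c + 2) = ps ((-1:ℤ) :: t) (c + 1) + t[c]'(by omega) := by
    have h2 : c + 1 < ((-1:ℤ) :: t).length := by simp [htL]; omega
    have h3 := List.sum_take_succ ((-1:ℤ) :: t) (c + 1) h2
    simpa [ps] using h3
  have hmem : t[c]'(by omega) = -1 ∨ t[c]'(by omega) = 1 :=
    hE _ (List.mem_cons_of_mem _ (List.getElem_mem _))
  have hprm : ps ((-1:ℤ) :: t) (c + 1) = -1 := by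
    have hne : ps ((-1:ℤ) :: t) (c + 1) ≠ 0 := hrmin _ (by omega) (by omega)
    have hle : ps ((-1:ℤ) :: t) (c + 1) ≤ 0 := hP _
    have hz : ps ((-1:ℤ) :: t) (c + 2) = 0 := by rw [← hc, ← hj]; exact hrz
    rcases hmem with h | h <;> rw [h] at hstep <;> omega
  have hval : t[c]'(by omega) = 1 := by
    have hz : ps ((-1:ℤ) :: t) (c + 2) = 0 := by rw [← hc, ← hj]; exact hrz
    rcases hmem with h | h <;> rw [h] at hstep <;> omega
  -- the surgery: t = t.take c ++ 1 :: t.drop (c+1)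
  obtain ⟨a, hadef⟩ : ∃ a', a' = t.take c := ⟨_, rfl⟩
  obtain ⟨b, hbdef⟩ : ∃ b', b' = t.drop (c + 1) := ⟨_, rfl⟩
  have hsurg : (-1 :: t : List ℤ) = glue a b := by
    unfold glue
    congr 1
    rw [hadef, hbdef]
    conv_lhs => rw [← List.take_append_drop c t]
    congr 1
    rw [List.drop_eq_getElem_cons (by omega : c < t.length), hval]
  have haLc : a.length = c := by
    rw [hadef, List.length_take]; omega
  have haL : a.length = 2 * (j - 1) := by omega
  have hbL : b.length = 2 * (n - j) := by
    rw [hbdef, List.length_drop]; omega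
  -- prefix sums of a
  have hpa : ∀ k, k ≤ c → ps a k = ps ((-1:ℤ) :: t) (k + 1) + 1 := by
    intro k hk
    have : ps a k = ps t k := by
      unfold ps
      have hmin : min k c = k := by omega
      rw [hadef, List.take_take, hmin]
    rw [this, hpst k]; ring
  have haS : a.sum = 0 := by
    have := hpa c le_rfl
    rw [ps_of_length_le a (by omega), hprm] at this
    omega
  have haP : ∀ k, ps a k ≤ 0 := by
    intro k
    rcases le_or_gt k c with hk | hk
    · rw [hpa k hk]
      have h0 : ps ((-1:ℤ) :: t) (k + 1) ≠ 0 := hrmin _ (by omega) (by omega)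
      have := hP (k + 1)
      omega
    · rw [ps_of_length_le a (by omega), haS]
  have haV : Valid (j - 1) a := by
    refine ⟨haL, ?_, haS, haP⟩
    intro x hx
    rw [hadef] at hx
    exact hE x (List.mem_cons_of_mem _ (List.mem_of_mem_take hx))
  -- prefix sums of b via glue_ps_high
  have haL' : a.length = 2 * (j - 1) := haL
  have hbV : Valid (n - j) b := by
    refine ⟨hbL, ?_, ?_, ?_⟩
    · intro x hx
      rw [hbdef] at hx
      exact hE x (List.mem_cons_of_mem _ (List.mem_of_mem_drop hx))
    · have h1 := hP (2 * n)
      have h2 : ps ((-1:ℤ) :: t) (2 * n) = 0 := by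
        rw [ps_of_length_le _ (le_of_eq hL)]; exact hS
      have h3 : ps ((-1:ℤ) :: t) (2 * n) = ps b (2 * n - (2 * (j-1) + 2)) := by
        rw [hsurg]
        exact glue_ps_high b haL haS (by omega)
      rw [h2] at h3
      have h4 : 2 * n - (2 * (j - 1) + 2) = b.length := by omega
      rw [h4, ps_of_length_le b le_rfl] at h3
      omega
    · intro k
      have h3 : ps ((-1:ℤ) :: t) (k + (2 * (j-1) + 2)) = ps b k := by
        rw [hsurg]
        rw [glue_ps_high b haL haS (by omega)]
        congr 1
        omega
      rw [← h3]
      exact hP _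
  exact ⟨j, a, b, hj1, hjn, haV, hbV, hsurg, by rw [← hj, hrdef]⟩



lemma extract_glue {p : ℕ} {a b : List ℤ} (hA : a.length = 2 * p) :
    ((glue a b).drop 1).take (2 * p) = a ∧ (glue a b).drop (2 * p + 2) = b := by
  constructor
  · have h1 : (glue a b).drop 1 = a ++ 1 :: b := by simp [glue]
    rw [h1, List.take_left' hA]
  · have h2 : glue a b = ((-1 :: a) ++ [1]) ++ b := by simp [glue]
    rw [h2, List.drop_left' (by simp [hA])]

lemma key {LDf : ℕ → Finset (List ℤ)} (hLD : ∀ m l, l ∈ LDf m ↔ Valid m l)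
    (n : ℕ) (hn : 1 ≤ n) (R : ℕ → Prop) [DecidablePred R] :
    ((LDf n).filter (fun l => R (ret l))).card
      = ∑ j ∈ Icc 1 n, (LDf (j - 1)).card *
          ((LDf (n - j)).filter (fun l => R (ret l + 1))).card := by
  classical
  have hstep1 : ((LDf n).filter (fun l => R (ret l))).card
      = ∑ j ∈ Icc 1 n,
          (((LDf n).filter (fun l => R (ret l))).filter (fun l => fr l = 2 * j)).card := by
    rw [Finset.card_eq_sum_card_fiberwise (f := fun l => fr l / 2) (t := Icc 1 n)]
    · apply Finset.sum_congr rfl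
      intro j hj
      congr 1
      apply Finset.filter_congr
      intro l hl
      have hv : Valid n l := (hLD n l).1 (Finset.mem_filter.1 hl).1
      obtain ⟨j', a, b, hj1', hjn', _, _, _, hfr⟩ := exists_decomp hv hn
      rw [hfr]
      omega
    · intro l hl
      have hv : Valid n l := (hLD n l).1 (Finset.mem_filter.1 hl).1
      obtain ⟨j', a, b, hj1', hjn', _, _, _, hfr⟩ := exists_decomp hv hn
      rw [Finset.mem_coe]; dsimp only; rw [hfr]
      simp only [Finset.mem_Icc]
      omega
  rw [hstep1]
  apply Finset.sum_congr rfl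
  intro q hq
  rw [Finset.mem_Icc] at hq
  rw [← Finset.card_product]
  refine Finset.card_nbij'
    (i := fun l => (((l.drop 1).take (2 * (q - 1))), l.drop (2 * q)))
    (j := fun p => glue p.1 p.2) ?_ ?_ ?_ ?_
  · -- membership of extraction
    intro l hl
    simp only [Finset.mem_coe, Finset.mem_filter] at hl
    obtain ⟨⟨hmem, hR⟩, hfr⟩ := hl
    have hv : Valid n l := (hLD n l).1 hmem
    obtain ⟨j', a, b, hj1', hjn', hva, hvb, hglue, hfr'⟩ := exists_decomp hv hn
    have hjj : j' = q := by rw [hfr] at hfr'; omega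
    rw [hjj] at hva hvb
    dsimp only
    have hext := extract_glue (b := b) hva.1
    have he2 : (glue a b).drop (2 * q) = b := by
      have h2q : 2 * (q - 1) + 2 = 2 * q := by omega
      rw [← h2q]; exact hext.2
    rw [hglue, hext.1, he2]
    simp only [Finset.mem_coe, Finset.mem_product, Finset.mem_filter]
    have hret : ret l = ret b + 1 := by rw [hglue]; exact ret_glue hva hvb
    refine ⟨(hLD _ _).2 hva, (hLD _ _).2 hvb, ?_⟩
    rw [hglue] at hret
    rw [← hret]
    rw [hglue] at hR
    exact hR
  · -- membership of glue
    rintro ⟨a, b⟩ hp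
    simp only [Finset.mem_coe, Finset.mem_product, Finset.mem_filter] at hp
    obtain ⟨ha, ⟨hb, hR⟩⟩ := hp
    have hva : Valid (q - 1) a := (hLD _ _).1 ha
    have hvb : Valid (n - q) b := (hLD _ _).1 hb
    have hvg : Valid n (glue a b) := by
      have := glue_valid hva hvb
      have hne : (q - 1) + (n - q) + 1 = n := by omega
      rwa [hne] at this
    simp only [Finset.mem_coe, Finset.mem_filter]
    refine ⟨⟨(hLD _ _).2 hvg, ?_⟩, ?_⟩
    · rw [ret_glue hva hvb]; exact hR
    · rw [fr_glue hva hvb]; omega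
  · -- left inverse : glue (extract l) = l
    intro l hl
    simp only [Finset.mem_coe, Finset.mem_filter] at hl
    obtain ⟨⟨hmem, _⟩, hfr⟩ := hl
    have hv : Valid n l := (hLD n l).1 hmem
    obtain ⟨j', a, b, hj1', hjn', hva, hvb, hglue, hfr'⟩ := exists_decomp hv hn
    have hjj : j' = q := by rw [hfr] at hfr'; omega
    rw [hjj] at hva hvb
    dsimp only
    have hext := extract_glue (b := b) hva.1
    have he2 : (glue a b).drop (2 * q) = b := by
      have h2q : 2 * (q - 1) + 2 = 2 * q := by omega
      rw [← h2q]; exact hext.2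
    rw [hglue, hext.1, he2]
  · -- right inverse : extract (glue p) = p
    rintro ⟨a, b⟩ hp
    simp only [Finset.mem_coe, Finset.mem_product, Finset.mem_filter] at hp
    have hva : Valid (q - 1) a := (hLD _ _).1 hp.1
    have hext := extract_glue (b := b) hva.1
    have he2 : (glue a b).drop (2 * q) = b := by
      have h2q : 2 * (q - 1) + 2 = 2 * q := by omega
      rw [← h2q]; exact hext.2
    simp only [hext.1, he2]



def toL {N : ℕ} (ε : Fin N → ({-1, 1} : Finset ℤ)) : List ℤ :=
  List.ofFn (fun i => (ε i : ℤ))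

lemma toL_injective {N : ℕ} : Function.Injective (toL (N := N)) := by
  intro f g h
  rw [toL, toL, List.ofFn_inj] at h
  funext i
  exact Subtype.ext (congrFun h i)

@[simp] lemma length_toL {N : ℕ} (ε : Fin N → ({-1, 1} : Finset ℤ)) :
    (toL ε).length = N := by simp [toL]

lemma psum_eq_ps {N : ℕ} (ε : Fin N → ({-1, 1} : Finset ℤ)) (k : ℕ) :
    psum ε k = ps (toL ε) k :=
  (List.sum_take_ofFn _ _).symm

noncomputable def LD (n : ℕ) : Finset (List ℤ) := (D n).image toL

lemma mem_LD {n : ℕ} {l : List ℤ} : l ∈ LD n ↔ Valid n l := by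
  classical
  constructor
  · rintro hl
    rw [LD, Finset.mem_image] at hl
    obtain ⟨ε, hε, rfl⟩ := hl
    simp only [D, Finset.mem_filter] at hε
    obtain ⟨-, hs, hp⟩ := hε
    have hsum : (toL ε).sum = 0 := by
      have h := psum_eq_ps ε (2 * n)
      rw [ps_of_length_le _ (by simp)] at h
      rw [← h]; exact hs
    refine ⟨by simp, ?_, hsum, ?_⟩
    · intro x hx
      rw [toL, List.mem_ofFn] at hx
      obtain ⟨i, rfl⟩ := hx
      have h2 := (ε i).2
      simp only [Finset.mem_insert, Finset.mem_singleton] at h2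
      exact h2
    · intro k
      rcases Nat.eq_zero_or_pos k with h0 | h0
      · simp [h0]
      rcases le_or_gt k (2 * n) with hk | hk
      · rw [← psum_eq_ps]
        exact hp k (Finset.mem_Icc.2 ⟨h0, hk⟩)
      · rw [ps_of_length_le _ (by simp; omega), hsum]
  · rintro ⟨hL, hE, hS, hP⟩
    rw [LD, Finset.mem_image]
    have hlen : ∀ i : Fin (2 * n), (i : ℕ) < l.length := fun i => by
      rw [hL]; exact i.isLt
    have hmem : ∀ i : Fin (2 * n), l[(i : ℕ)]'(hlen i) ∈ ({-1, 1} : Finset ℤ) := by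
      intro i
      simp only [Finset.mem_insert, Finset.mem_singleton]
      exact hE _ (List.getElem_mem _)
    refine ⟨fun i => ⟨l[(i : ℕ)]'(hlen i), hmem i⟩, ?_, ?_⟩
    · have htoL : toL (fun i => (⟨l[(i : ℕ)]'(hlen i), hmem i⟩ :
          ({-1, 1} : Finset ℤ))) = l := by
        apply List.ext_getElem
        · simp [hL]
        · intro i h1 h2
          simp [toL]
      simp only [D, Finset.mem_filter]
      refine ⟨Finset.mem_univ _, ?_, ?_⟩
      · rw [psum_eq_ps, htoL, ps_of_length_le _ (le_of_eq hL)]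
        exact hS
      · intro k _
        rw [psum_eq_ps, htoL]
        exact hP k
    · apply List.ext_getElem
      · simp [hL]
      · intro i h1 h2
        simp [toL]

lemma LD_zero : LD 0 = {[]} := by
  ext l
  rw [mem_LD, Finset.mem_singleton]
  constructor
  · rintro ⟨hL, -, -, -⟩
    simpa using List.length_eq_zero_iff.1 (by simpa using hL)
  · rintro rfl
    exact ⟨by simp, by simp, by simp, fun k => by simp [ps]⟩

@[simp] lemma ret_nil : ret [] = 0 := by simp [ret]

lemma card_LD (n : ℕ) : (LD n).card = catalan n := by
  induction n using Nat.strong_induction_on with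
  | _ n ih =>
    match n with
    | 0 => rw [LD_zero]; simp
    | (k + 1) =>
      have h1 : (LD (k+1)).card = ((LD (k+1)).filter (fun l => (fun _ => True) (ret l))).card := by
        rw [Finset.filter_true_of_mem]; intro _ _; trivial
      rw [h1, key (fun m l => mem_LD) (k+1) (by omega) (fun _ => True)]
      have h2 : ∀ j ∈ Icc 1 (k+1), (LD (j-1)).card *
          ((LD (k+1-j)).filter (fun l => True)).card = catalan (j-1) * catalan (k+1-j) := by
        intro j hj
        rw [Finset.mem_Icc] at hj
        rw [Finset.filter_true_of_mem (fun _ _ => trivial)]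
        rw [ih (j-1) (by omega), ih (k+1-j) (by omega)]
      rw [Finset.sum_congr rfl h2]
      have h3 : Icc 1 (k+1) = Ico 1 (k+2) := by exact (Finset.Ico_add_one_right_eq_Icc 1 (k+1)).symm
      rw [h3, Finset.sum_Ico_eq_sum_range, catalan_succ, Fin.sum_univ_eq_sum_range (fun i => catalan i * catalan (k - i)) (k+1)]
      have h4 : k + 2 - 1 = k + 1 := by omega
      rw [h4]
      apply Finset.sum_congr rfl
      intro i _
      have e1 : 1 + i - 1 = i := by omega
      have e2 : k + 1 - (1 + i) = k - i := by omega
      rw [e1, e2]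



def F : ℕ → ℕ → ℕ
  | n, 0 => if n = 0 then 1 else 0
  | n, m + 1 => ∑ j ∈ Icc 1 n, catalan (j - 1) * F (n - j) m

lemma ret_pos_of_valid {n : ℕ} (hn : 1 ≤ n) {l : List ℤ} (hv : Valid n l) : 1 ≤ ret l := by
  rw [ret, Nat.one_le_iff_ne_zero, ← Nat.pos_iff_ne_zero, Finset.card_pos]
  refine ⟨2 * n, ?_⟩
  rw [Finset.mem_filter, Finset.mem_Icc, hv.1]
  exact ⟨⟨by omega, le_rfl⟩, by rw [ps_of_length_le _ (le_of_eq hv.1)]; exact hv.2.2.1⟩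

lemma card_ret (m n : ℕ) : ((LD n).filter (fun l => ret l = m)).card = F n m := by
  induction m generalizing n with
  | zero =>
    match n with
    | 0 =>
      rw [LD_zero, F, Finset.filter_singleton, if_pos (by simp)]
      simp
    | k + 1 =>
      rw [F]
      simp only [Nat.succ_ne_zero, if_false]
      rw [Finset.card_eq_zero, Finset.filter_eq_empty_iff]
      intro l hl
      have := ret_pos_of_valid (by omega) (mem_LD.1 hl)
      omega
  | succ m ih =>
    match n with
    | 0 =>
      rw [LD_zero, F, Finset.filter_singleton, if_neg (by simp)]
      simp
    | k + 1 =>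
      have hk : ((LD (k+1)).filter (fun l => ret l = m + 1)).card
          = ∑ j ∈ Icc 1 (k+1), (LD (j - 1)).card *
              ((LD (k+1-j)).filter (fun l => ret l + 1 = m + 1)).card :=
        key (fun m l => mem_LD) (k+1) (by omega) (fun r => r = m + 1)
      rw [hk, F]
      apply Finset.sum_congr rfl
      intro j hj
      rw [card_LD]
      congr 1
      have hff : ((LD (k+1-j)).filter (fun l => ret l + 1 = m + 1))
          = ((LD (k+1-j)).filter (fun l => ret l = m)) := by
        apply Finset.filter_congr
        intro l _
        simp
      rw [hff, ih]

lemma rhs_eq (m n : ℕ) :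
    ∑ j ∈ (Finset.Nat.antidiagonalTuple m n).filter (fun j => ∀ i, 1 ≤ j i),
        ∏ i, catalan (j i - 1) = F n m := by
  induction m generalizing n with
  | zero =>
    match n with
    | 0 =>
      rw [Finset.Nat.antidiagonalTuple_zero_zero, F]
      simp
    | k + 1 =>
      rw [Finset.Nat.antidiagonalTuple_zero_succ, F]
      simp
  | succ m ih =>
    rw [F]
    have hterm : ∀ j ∈ Icc 1 n, catalan (j - 1) * F (n - j) m
        = ∑ y ∈ (Finset.Nat.antidiagonalTuple m (n - j)).filter (fun y => ∀ i, 1 ≤ y i),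
            catalan (j - 1) * ∏ i, catalan (y i - 1) := by
      intro j hj
      rw [← Finset.mul_sum, ih]
    rw [Finset.sum_congr rfl hterm, Finset.sum_sigma' (Icc 1 n)
      (fun j => (Finset.Nat.antidiagonalTuple m (n - j)).filter (fun y => ∀ i, 1 ≤ y i))
      (fun j y => catalan (j - 1) * ∏ i, catalan (y i - 1))]
    symm
    refine Finset.sum_nbij'
      (i := fun p : Σ _ : ℕ, (Fin m → ℕ) => (Fin.cons p.1 p.2 : Fin (m+1) → ℕ))
      (j := fun x : Fin (m+1) → ℕ => (⟨x 0, Fin.tail x⟩ : Σ _ : ℕ, (Fin m → ℕ)))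
      ?_ ?_ ?_ ?_ ?_
    · -- sigma → tuple membership
      rintro ⟨j, y⟩ hp
      simp only [Finset.mem_sigma, Finset.mem_Icc, Finset.mem_filter,
        Finset.Nat.mem_antidiagonalTuple] at hp
      obtain ⟨⟨hj1, hjn⟩, hsum, hpos⟩ := hp
      simp only [Finset.mem_filter, Finset.Nat.mem_antidiagonalTuple]
      constructor
      · rw [Fin.sum_univ_succ]
        simp only [Fin.cons_zero, Fin.cons_succ]
        omega
      · intro i
        rcases Fin.eq_zero_or_eq_succ i with h | ⟨i', rfl⟩
        · subst h; simpa using hj1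
        · simpa using hpos i'
    · -- tuple → sigma membership
      intro x hx
      simp only [Finset.mem_filter, Finset.Nat.mem_antidiagonalTuple] at hx
      obtain ⟨hsum, hpos⟩ := hx
      rw [Fin.sum_univ_succ] at hsum
      have h0 : 1 ≤ x 0 := hpos 0
      simp only [Finset.mem_sigma, Finset.mem_Icc, Finset.mem_filter,
        Finset.Nat.mem_antidiagonalTuple]
      refine ⟨⟨h0, by omega⟩, ?_, fun i => hpos i.succ⟩
      have h1 : ∑ i : Fin m, Fin.tail x i = ∑ i : Fin m, x i.succ := rfl
      rw [h1]; omega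
    · -- left inverse
      rintro ⟨j, y⟩ _
      simp [Fin.tail_cons]
    · -- right inverse
      intro x _
      simp [Fin.cons_self_tail]
    · -- values
      rintro ⟨j, y⟩ _
      rw [Fin.prod_univ_succ]
      simp



lemma card_D_filter (n m : ℕ) :
    ((D n).filter (fun ε =>
        ((Finset.Icc 1 (2 * n)).filter (fun k => psum ε k = 0)).card = m)).card
      = ((LD n).filter (fun l => ret l = m)).card := by
  classical
  symm
  rw [LD, Finset.filter_image, Finset.card_image_of_injective _ toL_injective]
  congr 1
  apply Finset.filter_congr
  intro ε _
  have hret : ret (toL ε) = ((Finset.Icc 1 (2 * n)).filter (fun k => psum ε k = 0)).card := by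
    rw [ret, length_toL]
    congr 1
    apply Finset.filter_congr
    intro k _
    rw [psum_eq_ps]
  rw [hret]

end CatConv

/-- The number of `ε ∈ {-1,1}^{2n}_+` for which exactly `m` indices `k ∈ {1,…,2n}`
satisfy `ε(1)+…+ε(k) = 0` equals the `m`-fold Catalan convolution of `n`. -/
theorem card_closed_components_eq_catalan_convolution
    (n m : ℕ) (hn : 1 ≤ n) (hm1 : 1 ≤ m) (hmn : m ≤ n) :
    ((D n).filter (fun ε =>
        ((Finset.Icc 1 (2 * n)).filter (fun k => psum ε k = 0)).card = m)).card
      = ∑ j ∈ (Finset.Nat.antidiagonalTuple m n).filter (fun j => ∀ i, 1 ≤ j i),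
          ∏ i, catalan (j i - 1) := by
  rw [CatConv.card_D_filter n m, CatConv.card_ret m n, ← CatConv.rhs_eq m n]
end

section
/- For every n ≥ 1 and every real q ∈ [-1, 1], the sum over all ε ∈ D_{2n} of (1 + q)^{r(ε)} equals the weighted Catalan convolution: the sum over m from 1 to n of (1 + q)^m times the sum over all tuples (j_1, ..., j_m) of positive integers with j_1 + ... + j_m = n of C_{j_1 - 1} · ... · C_{j_m - 1}. -/
open Finset

/-- `r(ε)`: the number of indices `k ∈ {1,…,2n}` with `ε(1)+…+ε(k) = 0`. -/
def r {N : ℕ} (ε : Fin N → ({-1, 1} : Finset ℤ)) : ℕ :=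
  ((Finset.Icc 1 N).filter (fun k => psum ε k = 0)).card

namespace CatAux

def pref (l : List ℤ) (k : ℕ) : ℤ := (l.take k).sum

def Ok (l : List ℤ) : Prop := ∀ x ∈ l, x = -1 ∨ x = 1

def rl (l : List ℤ) : ℕ := ((Finset.Icc 1 l.length).filter (fun k => pref l k = 0)).card

noncomputable def code {N : ℕ} (ε : Fin N → ({-1, 1} : Finset ℤ)) : List ℤ :=
  List.ofFn (fun i => (ε i : ℤ))

lemma length_code {N : ℕ} (ε : Fin N → ({-1, 1} : Finset ℤ)) : (code ε).length = N := by
  simp [code]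

lemma psum_eq_pref {N : ℕ} (ε : Fin N → ({-1, 1} : Finset ℤ)) (k : ℕ) :
    psum ε k = pref (code ε) k := (List.sum_take_ofFn _ _).symm

lemma code_injective {N : ℕ} : Function.Injective (code (N := N)) := by
  intro ε ε' h
  funext i
  have := congrArg (fun l : List ℤ => l.length) h
  have h2 : (ε i : ℤ) = (ε' i : ℤ) := by
    have := congrArg (fun l : List ℤ => l[(i:ℕ)]?) h
    simpa [code, List.getElem?_ofFn] using this
  exact Subtype.ext h2

lemma r_eq_rl {N : ℕ} (ε : Fin N → ({-1, 1} : Finset ℤ)) : r ε = rl (code ε) := by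
  unfold r rl
  rw [length_code]
  congr 1
  ext k
  simp [psum_eq_pref]

noncomputable def L (n : ℕ) : Finset (List ℤ) := (D n).image code

end CatAux

namespace CatAux

lemma mem_L_iff {n : ℕ} {l : List ℤ} :
    l ∈ L n ↔ l.length = 2 * n ∧ Ok l ∧ l.sum = 0 ∧ ∀ k, pref l k ≤ 0 := by
  constructor
  · rintro hl
    obtain ⟨ε, hε, rfl⟩ := Finset.mem_image.1 hl
    simp only [D, Finset.mem_filter] at hε
    obtain ⟨-, h0, hneg⟩ := hε
    have hlen : (code ε).length = 2 * n := length_code ε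
    have hsum : (code ε).sum = 0 := by
      have : pref (code ε) (2 * n) = 0 := by rw [← psum_eq_pref]; exact h0
      rwa [pref, List.take_of_length_le (le_of_eq hlen)] at this
    refine ⟨hlen, ?_, hsum, ?_⟩
    · intro x hx
      rw [code, List.mem_ofFn] at hx
      obtain ⟨i, rfl⟩ := hx
      have := (ε i).2
      rw [Finset.mem_insert, Finset.mem_singleton] at this
      exact this
    · intro k
      rcases Nat.eq_zero_or_pos k with rfl | hk
      · simp [pref]
      rcases le_or_gt k (2 * n) with hk2 | hk2
      · rw [← psum_eq_pref]; exact hneg k (Finset.mem_Icc.2 ⟨hk, hk2⟩)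
      · have : (code ε).take k = code ε := List.take_of_length_le (by omega)
        rw [pref, this, hsum]
  · rintro ⟨hlen, hok, hsum, hneg⟩
    have hl2 : ∀ i : Fin (2 * n), (i : ℕ) < l.length := fun i => by rw [hlen]; exact i.2
    set ε : Fin (2 * n) → ({-1, 1} : Finset ℤ) := fun i => ⟨l[(i : ℕ)]'(hl2 i), by
      rw [Finset.mem_insert, Finset.mem_singleton]
      exact hok _ (List.getElem_mem _)⟩ with hε
    have hcode : code ε = l := by
      apply List.ext_getElem
      · simp [code, hlen]
      · intro i h1 h2
        simp [code, hε]
    refine Finset.mem_image.2 ⟨ε, ?_, hcode⟩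
    simp only [D, Finset.mem_filter]
    refine ⟨Finset.mem_univ _, ?_, ?_⟩
    · rw [psum_eq_pref, hcode, pref, ← hlen, List.take_length, hsum]
    · intro k _
      rw [psum_eq_pref, hcode]
      exact hneg k

end CatAux

namespace CatAux

def glue (a b : List ℤ) : List ℤ := -1 :: (a ++ 1 :: b)

lemma length_glue (a b : List ℤ) : (glue a b).length = a.length + b.length + 2 := by
  simp [glue]; omega

lemma pref_zero (l : List ℤ) : pref l 0 = 0 := rfl

lemma pref_glue_low (a b : List ℤ) {k : ℕ} (hk : k ≤ a.length) :
    pref (glue a b) (k + 1) = -1 + pref a k := by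
  simp only [glue, pref, List.take_succ_cons, List.sum_cons,
    List.take_append_of_le_length hk]

lemma pref_glue_high (a b : List ℤ) (k : ℕ) :
    pref (glue a b) (a.length + 2 + k) = a.sum + pref b k := by
  have h1 : glue a b = (-1 :: a) ++ (1 :: b) := by simp [glue]
  have h2 : a.length + 2 + k = (-1 :: a : List ℤ).length + (k + 1) := by simp; omega
  rw [pref, h1, h2, List.take_length_add_append]
  simp [pref]
  ring

lemma pref_parity {l : List ℤ} (hok : ∀ x ∈ l, x = -1 ∨ x = 1) :
    ∀ k, k ≤ l.length → (2 : ℤ) ∣ (pref l k + k) := by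
  intro k
  induction k with
  | zero => intro _; simp [pref]
  | succ k ih =>
    intro hk
    have hk' : k < l.length := by omega
    have hs : pref l (k + 1) = pref l k + l[k] := List.sum_take_succ l k hk'
    have hmem := hok _ (List.getElem_mem hk')
    have ih' := ih (by omega)
    rcases hmem with h | h <;> rw [hs, h] <;> push_cast <;> omega

lemma rl_glue {a b : List ℤ} (hneg : ∀ k, pref a k ≤ 0) (hsum : a.sum = 0) :
    rl (glue a b) = 1 + rl b := by
  classical
  have len := length_glue a b
  have hset : ((Finset.Icc 1 (glue a b).length).filter (fun k => pref (glue a b) k = 0))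
      = ((Finset.Icc 0 b.length).filter (fun k => pref b k = 0)).image
          (fun k => a.length + 2 + k) := by
    ext k
    simp only [Finset.mem_filter, Finset.mem_Icc, Finset.mem_image, len]
    constructor
    · rintro ⟨⟨hk1, hk2⟩, hk0⟩
      rcases le_or_gt k (a.length + 1) with hk | hk
      · exfalso
        obtain ⟨k', rfl⟩ : ∃ k', k = k' + 1 := ⟨k - 1, by omega⟩
        have := pref_glue_low a b (k := k') (by omega)
        have := hneg k'
        omega
      · refine ⟨k - (a.length + 2), ⟨⟨by omega, by omega⟩, ?_⟩, by omega⟩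
        have := pref_glue_high a b (k - (a.length + 2))
        rw [show a.length + 2 + (k - (a.length + 2)) = k by omega] at this
        omega
    · rintro ⟨k', ⟨⟨-, hk2⟩, hk0⟩, rfl⟩
      have := pref_glue_high a b k'
      exact ⟨⟨by omega, by omega⟩, by omega⟩
  have hinj : Function.Injective (fun k => a.length + 2 + k) := fun x y h => by simpa using h
  rw [rl, hset, Finset.card_image_of_injective _ hinj]
  have h0 : (Finset.Icc 0 b.length) = insert 0 (Finset.Icc 1 b.length) := by
    ext k; simp [Finset.mem_Icc, Finset.mem_insert]; omega
  rw [h0, Finset.filter_insert, if_pos (pref_zero b), Finset.card_insert_of_notMem (by simp)]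
  rw [rl, add_comm]

noncomputable def fr (l : List ℤ) : ℕ := sInf {k | 1 ≤ k ∧ pref l k = 0}

lemma fr_spec {l : List ℤ} (hl : 1 ≤ l.length) (hsum : l.sum = 0) :
    1 ≤ fr l ∧ fr l ≤ l.length ∧ pref l (fr l) = 0 ∧
      (∀ k, 1 ≤ k → k < fr l → pref l k ≠ 0) := by
  have hne : l.length ∈ {k | 1 ≤ k ∧ pref l k = 0} := by
    refine ⟨hl, ?_⟩
    rw [pref, List.take_length, hsum]
  have hmem : fr l ∈ {k | 1 ≤ k ∧ pref l k = 0} := Nat.sInf_mem ⟨_, hne⟩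
  refine ⟨hmem.1, Nat.sInf_le hne, hmem.2, ?_⟩
  intro k h1 hk h0
  have : fr l ≤ k := Nat.sInf_le (show k ∈ {k | 1 ≤ k ∧ pref l k = 0} from ⟨h1, h0⟩)
  omega

lemma fr_glue {a b : List ℤ} (hneg : ∀ k, pref a k ≤ 0) (hsum : a.sum = 0) :
    fr (glue a b) = a.length + 2 := by
  have hmem : a.length + 2 ∈ {k | 1 ≤ k ∧ pref (glue a b) k = 0} := by
    refine ⟨by omega, ?_⟩
    have := pref_glue_high a b 0
    simpa [pref_zero, hsum] using this
  have h1 : fr (glue a b) ≤ a.length + 2 := Nat.sInf_le hmem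
  have h2 : fr (glue a b) ∈ {k | 1 ≤ k ∧ pref (glue a b) k = 0} :=
    Nat.sInf_mem ⟨_, hmem⟩
  by_contra h
  have hlt : fr (glue a b) < a.length + 2 := by omega
  obtain ⟨k', hk'⟩ : ∃ k', fr (glue a b) = k' + 1 := ⟨fr (glue a b) - 1, by
    have := h2.1; omega⟩
  have hlow := pref_glue_low a b (k := k') (by omega)
  have := hneg k'
  have h3 := h2.2
  rw [hk'] at h3
  omega

end CatAux

namespace CatAux

lemma glue_mem {n j : ℕ} {a b : List ℤ} (hj : j ∈ Finset.Icc 1 n)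
    (ha : a ∈ L (j - 1)) (hb : b ∈ L (n - j)) : glue a b ∈ L n := by
  rw [Finset.mem_Icc] at hj
  obtain ⟨hla, haok, hasum, haneg⟩ := mem_L_iff.1 ha
  obtain ⟨hlb, hbok, hbsum, hbneg⟩ := mem_L_iff.1 hb
  refine mem_L_iff.2 ⟨?_, ?_, ?_, ?_⟩
  · rw [length_glue]; omega
  · intro x hx
    simp only [glue, List.mem_cons, List.mem_append] at hx
    rcases hx with rfl | h | h
    · left; rfl
    · exact haok x h
    · rcases h with rfl | h
      · right; rfl
      · exact hbok x h
  · simp [glue, hasum, hbsum]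
  · intro k
    rcases Nat.eq_zero_or_pos k with rfl | hk
    · simp [pref_zero]
    rcases le_or_gt k (a.length + 1) with hk2 | hk2
    · obtain ⟨k', rfl⟩ : ∃ k', k = k' + 1 := ⟨k - 1, by omega⟩
      have := pref_glue_low a b (k := k') (by omega)
      have := haneg k'
      omega
    · obtain ⟨k', rfl⟩ : ∃ k', k = a.length + 2 + k' := ⟨k - (a.length + 2), by omega⟩
      have := pref_glue_high a b k'
      have := hbneg k'
      omega

lemma decomp {n : ℕ} (hn : 1 ≤ n) {l : List ℤ} (hl : l ∈ L n) :
    ∃ j, j ∈ Finset.Icc 1 n ∧ fr l = 2 * j ∧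
      l.tail.take (fr l - 2) ∈ L (j - 1) ∧ l.drop (fr l) ∈ L (n - j) ∧
      glue (l.tail.take (fr l - 2)) (l.drop (fr l)) = l := by
  obtain ⟨hlen, hok, hsum, hneg⟩ := mem_L_iff.1 hl
  have hlen1 : 1 ≤ l.length := by omega
  obtain ⟨hp1, hple, hp0, hpmin⟩ := fr_spec hlen1 hsum
  set p := fr l with hp
  clear_value p
  have hpmin' : ∀ k, 1 ≤ k → k < p → pref l k ≤ -1 := by
    intro k h1 h2
    have := hpmin k h1 h2
    have := hneg k
    omega
  have hpar := pref_parity hok p hple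
  have hpeven : 2 ∣ p := by
    rw [hp0] at hpar
    omega
  have hp2 : 2 ≤ p := by
    rcases hpeven with ⟨c, hc⟩; omega
  obtain ⟨j, rfl⟩ := hpeven
  have hj : j ∈ Finset.Icc 1 n := by
    rw [Finset.mem_Icc]; omega
  obtain ⟨x, t, rfl⟩ : ∃ x t, l = x :: t := by
    cases l with
    | nil => simp at hlen1
    | cons x t => exact ⟨x, t, rfl⟩
  obtain ⟨m, hm⟩ : ∃ m, 2 * j = m + 2 := ⟨2 * j - 2, by omega⟩
  rw [hm] at hp0 hple hpmin' ⊢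
  have hlt : t.length = 2 * n - 1 := by simp at hlen; omega
  have hx : x = -1 := by
    have h1 : pref (x :: t) 1 = x := by simp [pref]
    have := hpmin' 1 le_rfl (by omega)
    have := hok x (by simp)
    omega
  have hplen : m + 1 < (x :: t).length := by simp; omega
  have hstep : pref (x :: t) (m + 2) = pref (x :: t) (m + 1) + (x :: t)[m + 1] :=
    List.sum_take_succ (x :: t) (m + 1) hplen
  have hprev : pref (x :: t) (m + 1) ≤ -1 := hpmin' _ (by omega) (by omega)
  have hentry : (x :: t)[m + 1] = -1 ∨ (x :: t)[m + 1] = 1 :=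
    hok _ (List.getElem_mem hplen)
  have hget : (x :: t)[m + 1] = 1 := by omega
  have hprev' : pref (x :: t) (m + 1) = -1 := by omega
  have htail : (x :: t).tail = t := rfl
  have hmt : m < t.length := by omega
  have hgt : t[m] = 1 := by
    have : (x :: t)[m + 1] = t[m] := List.getElem_cons_succ ..
    omega
  have hsimpidx : m + 2 - 2 = m := by omega
  rw [htail, hsimpidx]
  have hglue : glue (t.take m) ((x :: t).drop (m + 2)) = x :: t := by
    rw [glue, hx]
    congr 1
    have hsplit : t = t.take m ++ t.drop m := (List.take_append_drop _ _).symm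
    have hdrop : t.drop m = t[m] :: t.drop (m + 1) := List.drop_eq_getElem_cons hmt
    have hdd : t.drop (m + 1) = (x :: t).drop (m + 2) := rfl
    rw [hdrop, hgt, hdd] at hsplit
    exact hsplit.symm
  have hkey : ∀ k, k ≤ m → pref (t.take m) k = pref (x :: t) (k + 1) + 1 := by
    intro k hk
    have h1 : (t.take m).take k = t.take k := by
      rw [List.take_take, min_eq_left hk]
    have h2 : pref (x :: t) (k + 1) = x + pref t k := by simp [pref]
    rw [pref, h1, h2, hx]
    rw [pref]
    ring
  have hlena : (t.take m).length = m := by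
    rw [List.length_take]; omega
  have hasum : (t.take m).sum = 0 := by
    have := hkey m le_rfl
    rw [hprev'] at this
    rw [pref, List.take_of_length_le (le_of_eq hlena)] at this
    omega
  have ha : t.take m ∈ L (j - 1) := by
    refine mem_L_iff.2 ⟨by rw [hlena]; omega, ?_, hasum, ?_⟩
    · intro y hy
      exact hok y (List.mem_cons_of_mem _ (List.mem_of_mem_take hy))
    · intro k
      rcases le_or_gt k m with hk | hk
      · rcases Nat.eq_zero_or_pos k with rfl | hk1
        · simp [pref_zero]
        have := hkey k hk
        have := hpmin' (k + 1) (by omega) (by omega)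
        omega
      · rw [pref, List.take_of_length_le (by omega), hasum]
  have hkey2 : ∀ k, pref ((x :: t).drop (m + 2)) k = pref (x :: t) (m + 2 + k) := by
    intro k
    have h0 := List.take_add (l := x :: t) (i := m + 2) (j := k)
    have h1 : pref (x :: t) (m + 2 + k) =
        pref (x :: t) (m + 2) + pref ((x :: t).drop (m + 2)) k := by
      rw [pref, h0, List.sum_append]; rfl
    rw [h1, hp0]
    ring
  have hlenb : ((x :: t).drop (m + 2)).length = 2 * n - (m + 2) := by
    rw [List.length_drop]; simp; omega
  have hb : (x :: t).drop (m + 2) ∈ L (n - j) := by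
    refine mem_L_iff.2 ⟨by rw [hlenb]; omega, ?_, ?_, ?_⟩
    · intro y hy
      exact hok y (List.mem_of_mem_drop hy)
    · have := hkey2 (2 * n - (m + 2))
      rw [pref, List.take_of_length_le (le_of_eq hlenb),
        show m + 2 + (2 * n - (m + 2)) = 2 * n by omega] at this
      rw [this, ← hlen, pref, List.take_length, hsum]
    · intro k
      rw [hkey2]
      exact hneg _
  exact ⟨j, hj, hm.symm, ha, hb, hglue⟩

end CatAux

namespace CatAux

lemma glue_recover {n j : ℕ} {a b : List ℤ} (hj : j ∈ Finset.Icc 1 n)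
    (ha : a ∈ L (j - 1)) (hb : b ∈ L (n - j)) :
    fr (glue a b) = 2 * j ∧ (glue a b).tail.take (fr (glue a b) - 2) = a ∧
      (glue a b).drop (fr (glue a b)) = b := by
  rw [Finset.mem_Icc] at hj
  obtain ⟨hla, haok, hasum, haneg⟩ := mem_L_iff.1 ha
  have hfr : fr (glue a b) = a.length + 2 := fr_glue haneg hasum
  have hla2 : a.length + 2 = 2 * j := by omega
  refine ⟨by rw [hfr, hla2], ?_, ?_⟩
  · rw [hfr]
    show (a ++ 1 :: b).take (a.length + 2 - 2) = a
    rw [show a.length + 2 - 2 = a.length from rfl]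
    exact List.take_left
  · rw [hfr]
    show (a ++ 1 :: b).drop (a.length + 1) = b
    have : a ++ 1 :: b = (a ++ [1]) ++ b := by simp
    rw [this, show a.length + 1 = (a ++ [1]).length by simp]
    exact List.drop_left

lemma sum_L_decomp {M : Type*} [AddCommMonoid M] {n : ℕ} (hn : 1 ≤ n) (f : List ℤ → M) :
    ∑ l ∈ L n, f l =
      ∑ x ∈ (Finset.Icc 1 n).sigma (fun j => L (j - 1) ×ˢ L (n - j)), f (glue x.2.1 x.2.2) := by
  refine Finset.sum_nbij'
    (fun l => ⟨fr l / 2, (l.tail.take (fr l - 2), l.drop (fr l))⟩)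
    (fun x => glue x.2.1 x.2.2) ?_ ?_ ?_ ?_ ?_
  · intro l hl
    obtain ⟨j, hj, hfr, ha, hb, -⟩ := decomp hn hl
    refine Finset.mem_sigma.2 ?_
    dsimp only
    have h2 : fr l / 2 = j := by omega
    rw [h2]
    exact ⟨hj, Finset.mem_product.2 ⟨ha, hb⟩⟩
  · rintro ⟨j, a, b⟩ hx
    rw [Finset.mem_sigma, Finset.mem_product] at hx
    exact glue_mem hx.1 hx.2.1 hx.2.2
  · intro l hl
    obtain ⟨j, hj, hfr, ha, hb, hg⟩ := decomp hn hl
    exact hg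
  · rintro ⟨j, a, b⟩ hx
    rw [Finset.mem_sigma, Finset.mem_product] at hx
    have hxj : j ∈ Finset.Icc 1 n := hx.1
    have hxa : a ∈ L (j - 1) := hx.2.1
    have hxb : b ∈ L (n - j) := hx.2.2
    obtain ⟨h1, h2, h3⟩ := glue_recover hxj hxa hxb
    have hj1 : 1 ≤ j := (Finset.mem_Icc.1 hxj).1
    have h4 : fr (glue a b) / 2 = j := by omega
    dsimp only
    rw [h4, h2, h3]
  · intro l hl
    obtain ⟨j, hj, hfr, ha, hb, hg⟩ := decomp hn hl
    rw [hg]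

lemma L_zero : L 0 = {([] : List ℤ)} := by
  ext l
  rw [mem_L_iff]
  constructor
  · rintro ⟨hlen, -, -, -⟩
    simp only [Finset.mem_singleton]
    exact List.length_eq_zero_iff.1 (by omega)
  · rintro h
    rw [Finset.mem_singleton] at h
    subst h
    exact ⟨by simp, by intro x hx; simp at hx, by simp, fun k => by simp [pref]⟩

lemma card_L : ∀ n, (L n).card = catalan n := by
  intro n
  induction n using Nat.strong_induction_on with
  | _ n ih =>
    match n with
    | 0 => rw [L_zero]; simp [catalan_zero]
    | Nat.succ N =>
      have h1 : (L (N + 1)).card = ∑ l ∈ L (N + 1), 1 := Finset.card_eq_sum_ones _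
      rw [h1, sum_L_decomp (by omega) (fun _ => 1)]
      have h2 : ∑ x ∈ (Finset.Icc 1 (N + 1)).sigma (fun j => L (j - 1) ×ˢ L (N + 1 - j)),
          (1 : ℕ) = ∑ j ∈ Finset.Icc 1 (N + 1), (L (j - 1)).card * (L (N + 1 - j)).card := by
        rw [Finset.sum_sigma]
        refine Finset.sum_congr rfl fun j hj => ?_
        rw [← Finset.card_eq_sum_ones, Finset.card_product]
      rw [h2]
      have h3 : ∀ j ∈ Finset.Icc 1 (N + 1),
          (L (j - 1)).card * (L (N + 1 - j)).card = catalan (j - 1) * catalan (N + 1 - j) := by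
        intro j hj
        rw [Finset.mem_Icc] at hj
        rw [ih (j - 1) (by omega), ih (N + 1 - j) (by omega)]
      rw [Finset.sum_congr rfl h3, catalan_succ]
      rw [← Finset.sum_range (f := fun i => catalan i * catalan (N - i))]
      rw [show Finset.Icc 1 (N + 1) = Finset.Ico 1 (N + 2) from by ext x; simp only [Finset.mem_Icc, Finset.mem_Ico]; omega,
        Finset.sum_Ico_eq_sum_range]
      rw [show N + 2 - 1 = N + 1 from rfl]
      refine Finset.sum_congr rfl fun i hi => ?_
      congr 1
      · congr 1; omega
      · congr 1; omega

end CatAux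

namespace CatAux

noncomputable def T (m n : ℕ) : ℕ :=
  ∑ j ∈ (Finset.Nat.antidiagonalTuple m n).filter (fun j => ∀ i, 1 ≤ j i),
    ∏ i, catalan (j i - 1)

lemma T_zero_zero : T 0 0 = 1 := by
  rw [T, Finset.Nat.antidiagonalTuple_zero_zero]
  simp

lemma T_zero_succ {n : ℕ} (hn : 1 ≤ n) : T 0 n = 0 := by
  obtain ⟨k, rfl⟩ : ∃ k, n = k + 1 := ⟨n - 1, by omega⟩
  rw [T, Finset.Nat.antidiagonalTuple_zero_succ]
  rfl

lemma T_eq_zero_of_lt {m n : ℕ} (h : n < m) : T m n = 0 := by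
  rw [T]
  convert Finset.sum_empty
  rw [Finset.filter_eq_empty_iff]
  intro x hx
  rw [Finset.Nat.mem_antidiagonalTuple] at hx
  intro hall
  have : (m : ℕ) ≤ ∑ i : Fin m, x i := by
    calc (m : ℕ) = ∑ _i : Fin m, 1 := by simp
    _ ≤ ∑ i : Fin m, x i := Finset.sum_le_sum fun i _ => hall i
  omega

lemma T_succ (m n : ℕ) :
    T (m + 1) n = ∑ j ∈ Finset.Icc 1 n, catalan (j - 1) * T m (n - j) := by
  rw [T]
  have key : ∑ x ∈ (Finset.Nat.antidiagonalTuple (m + 1) n).filter (fun j => ∀ i, 1 ≤ j i),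
      ∏ i, catalan (x i - 1)
      = ∑ y ∈ (Finset.Icc 1 n).sigma (fun j =>
          (Finset.Nat.antidiagonalTuple m (n - j)).filter (fun t => ∀ i, 1 ≤ t i)),
          catalan (y.1 - 1) * ∏ i, catalan (y.2 i - 1) := by
    refine Finset.sum_nbij' (fun x => ⟨x 0, Fin.tail x⟩)
      (fun y => Fin.cons y.1 y.2) ?_ ?_ ?_ ?_ ?_
    · intro x hx
      rw [Finset.mem_filter, Finset.Nat.mem_antidiagonalTuple] at hx
      obtain ⟨hsum, hall⟩ := hx
      rw [Fin.sum_univ_succ] at hsum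
      have h0 : x 0 ∈ Finset.Icc 1 n := Finset.mem_Icc.2 ⟨hall 0, by omega⟩
      refine Finset.mem_sigma.2 ⟨h0, ?_⟩
      dsimp only
      rw [Finset.mem_filter, Finset.Nat.mem_antidiagonalTuple]
      refine ⟨?_, fun i => hall i.succ⟩
      show ∑ i : Fin m, x i.succ = n - x 0
      omega
    · rintro ⟨j, t⟩ hy
      rw [Finset.mem_sigma] at hy
      have hj' : j ∈ Finset.Icc 1 n := hy.1
      have hj := Finset.mem_Icc.1 hj'
      have ht' : t ∈ (Finset.Nat.antidiagonalTuple m (n - j)).filter (fun t => ∀ i, 1 ≤ t i) :=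
        hy.2
      have ht := ht'
      rw [Finset.mem_filter, Finset.Nat.mem_antidiagonalTuple] at ht
      rw [Finset.mem_filter, Finset.Nat.mem_antidiagonalTuple]
      constructor
      · rw [Fin.sum_univ_succ]
        simp only [Fin.cons_zero, Fin.cons_succ]
        omega
      · intro i
        refine Fin.cases ?_ ?_ i
        · simpa using hj.1
        · intro i'; simpa using ht.2 i'
    · intro x hx
      exact Fin.cons_self_tail x
    · rintro ⟨j, t⟩ hy
      simp only [Fin.cons_zero, Fin.tail_cons]
    · intro x hx
      dsimp only
      rw [Fin.prod_univ_succ]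
      rfl
  rw [key, Finset.sum_sigma]
  refine Finset.sum_congr rfl fun j hj => ?_
  calc ∑ s ∈ (Finset.Nat.antidiagonalTuple m (n - j)).filter (fun t => ∀ i, 1 ≤ t i),
      catalan ((⟨j, s⟩ : Σ _ : ℕ, Fin m → ℕ).1 - 1) * ∏ i, catalan ((⟨j, s⟩ : Σ _ : ℕ, Fin m → ℕ).2 i - 1)
      = ∑ s ∈ (Finset.Nat.antidiagonalTuple m (n - j)).filter (fun t => ∀ i, 1 ≤ t i),
        catalan (j - 1) * ∏ i, catalan (s i - 1) := Finset.sum_congr rfl (fun s _ => rfl)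
    _ = catalan (j - 1) * T m (n - j) := by rw [← Finset.mul_sum]; rfl

end CatAux

namespace CatAux

lemma rl_nil : rl ([] : List ℤ) = 0 := by simp [rl]

lemma main (x : ℝ) : ∀ n, (∑ l ∈ L n, x ^ rl l)
    = ∑ m ∈ Finset.range (n + 1), x ^ m * (T m n : ℝ) := by
  intro n
  induction n using Nat.strong_induction_on with
  | _ n ih =>
    match n with
    | 0 =>
      rw [L_zero, Finset.sum_singleton, rl_nil]
      rw [Finset.sum_range_one, T_zero_zero]
      simp
    | Nat.succ N =>
      have hn : (1 : ℕ) ≤ N + 1 := by omega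
      have step : ∀ j ∈ Finset.Icc 1 (N + 1),
          (∑ p ∈ L (j - 1) ×ˢ L (N + 1 - j), x ^ rl (glue p.1 p.2))
            = (catalan (j - 1) : ℝ) * x *
              ∑ m ∈ Finset.range (N + 1 - j + 1), x ^ m * (T m (N + 1 - j) : ℝ) := by
        intro j hj
        have hj' := Finset.mem_Icc.1 hj
        rw [Finset.sum_product]
        have hterm : ∀ a ∈ L (j - 1), (∑ b ∈ L (N + 1 - j), x ^ rl (glue a b))
            = x * ∑ b ∈ L (N + 1 - j), x ^ rl b := by
          intro a ha
          obtain ⟨-, -, hasum, haneg⟩ := mem_L_iff.1 ha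
          rw [Finset.mul_sum]
          refine Finset.sum_congr rfl fun b hb => ?_
          rw [rl_glue haneg hasum, pow_add, pow_one]
        rw [Finset.sum_congr rfl hterm, Finset.sum_const,
          ih (N + 1 - j) (by omega), card_L, nsmul_eq_mul]
        ring
      have rhs : ∑ m ∈ Finset.range (N + 1 + 1), x ^ m * (T m (N + 1) : ℝ)
          = ∑ j ∈ Finset.Icc 1 (N + 1), (catalan (j - 1) : ℝ) * x *
              ∑ m ∈ Finset.range (N + 1 - j + 1), x ^ m * (T m (N + 1 - j) : ℝ) := by
        rw [Finset.sum_range_succ']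
        rw [T_zero_succ hn]
        have h1 : ∀ i ∈ Finset.range (N + 1), x ^ (i + 1) * (T (i + 1) (N + 1) : ℝ)
            = ∑ j ∈ Finset.Icc 1 (N + 1),
                x ^ (i + 1) * ((catalan (j - 1) : ℝ) * (T i (N + 1 - j) : ℝ)) := by
          intro i _
          rw [T_succ]
          push_cast
          rw [Finset.mul_sum]
        rw [Finset.sum_congr rfl h1, Finset.sum_comm]
        simp only [Nat.cast_zero, mul_zero, add_zero]
        refine Finset.sum_congr rfl fun j hj => ?_
        have hj' := Finset.mem_Icc.1 hj
        have hsub : Finset.range (N + 1 - j + 1) ⊆ Finset.range (N + 1) := by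
          intro i hi
          rw [Finset.mem_range] at hi ⊢
          omega
        rw [show (catalan (j - 1) : ℝ) * x *
            ∑ m ∈ Finset.range (N + 1 - j + 1), x ^ m * (T m (N + 1 - j) : ℝ)
            = ∑ m ∈ Finset.range (N + 1 - j + 1),
                x ^ (m + 1) * ((catalan (j - 1) : ℝ) * (T m (N + 1 - j) : ℝ)) from by
          rw [Finset.mul_sum]
          exact Finset.sum_congr rfl fun m _ => by ring]
        refine (Finset.sum_subset hsub ?_).symm
        intro i hi1 hi2
        rw [Finset.mem_range] at hi1 hi2
        push_neg at hi2
        rw [T_eq_zero_of_lt (by omega)]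
        simp
      rw [sum_L_decomp hn (fun l => x ^ rl l), Finset.sum_sigma,
        Finset.sum_congr rfl step, rhs]

end CatAux

open CatAux

/-- For `n ≥ 1` and `q ∈ [-1,1]`, the sum over `ε ∈ {-1,1}^{2n}_+` of `(1+q)^{r(ε)}`
equals the weighted Catalan convolution
`∑_{m=1}^{n} (1+q)^m ∑_{j_1,…,j_m ≥ 1, j_1+…+j_m = n} C_{j_1-1} ⋯ C_{j_m-1}`. -/
theorem sum_weight_eq_weighted_catalan_convolution
    (n : ℕ) (hn : 1 ≤ n) (q : ℝ) (hq : q ∈ Set.Icc (-1 : ℝ) 1) :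
    (∑ ε ∈ D n, (1 + q) ^ (r ε))
      = ∑ m ∈ Finset.Icc 1 n, (1 + q) ^ m *
          ((∑ j ∈ (Finset.Nat.antidiagonalTuple m n).filter (fun j => ∀ i, 1 ≤ j i),
              ∏ i, catalan (j i - 1) : ℕ) : ℝ) := by
  have h1 : (∑ ε ∈ D n, (1 + q) ^ (r ε)) = ∑ l ∈ L n, (1 + q) ^ rl l := by
    rw [L, Finset.sum_image (fun a _ b _ h => code_injective h)]
    exact Finset.sum_congr rfl fun ε _ => by rw [r_eq_rl]
  rw [h1, main (1 + q) n]
  have h2 : Finset.range (n + 1) = insert 0 (Finset.Icc 1 n) := by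
    ext k
    simp only [Finset.mem_range, Finset.mem_insert, Finset.mem_Icc]
    omega
  rw [h2, Finset.sum_insert (by simp)]
  rw [T_zero_succ hn]
  simp only [Nat.cast_zero, mul_zero, pow_zero, zero_add]
  exact Finset.sum_congr rfl fun m _ => rfl
end

section
/- For every n ≥ 1, the sum over m from 1 to n of 2^m times the sum over all tuples (i_1, ..., i_m) of nonnegative integers with i_1 + ... + i_m = n - m of C_{i_1} · ... · C_{i_m} equals the central binomial coefficient binomial(2n, n). (This is the weighted Catalan convolution w_n(q) at q = 1, i.e. the 2n-th moment of the arcsine distribution with unit variance.) -/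
open Finset

def catConv (m k : ℕ) : ℕ :=
  ∑ i ∈ Finset.Nat.antidiagonalTuple m k, ∏ j, catalan (i j)

lemma catConv_succ (m k : ℕ) :
    catConv (m + 1) k = ∑ j ∈ range (k + 1), catalan j * catConv m (k - j) := by
  rw [← Finset.Nat.sum_antidiagonal_eq_sum_range_succ_mk
    (fun p => catalan p.1 * catConv m p.2)]
  simp only [catConv, Finset.mul_sum]
  rw [Finset.sum_sigma']
  refine (Finset.sum_nbij' (fun p => Fin.cons p.1.1 p.2)
    (fun i => ⟨(i 0, ∑ j, Fin.tail i j), Fin.tail i⟩) ?_ ?_ ?_ ?_ ?_).symm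
  · rintro ⟨⟨a, b⟩, x⟩ h
    rw [Finset.mem_sigma, Finset.HasAntidiagonal.mem_antidiagonal] at h
    obtain ⟨h1, h2⟩ := h
    rw [Finset.Nat.mem_antidiagonalTuple] at h2 ⊢
    rw [Fin.sum_cons, h2, h1]
  · intro i hi
    rw [Finset.Nat.mem_antidiagonalTuple] at hi
    rw [Finset.mem_sigma, Finset.HasAntidiagonal.mem_antidiagonal]
    constructor
    · rw [← hi, Fin.sum_univ_succ]; rfl
    · rw [Finset.Nat.mem_antidiagonalTuple]
  · rintro ⟨⟨a, b⟩, x⟩ h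
    rw [Finset.mem_sigma, Finset.HasAntidiagonal.mem_antidiagonal, Finset.Nat.mem_antidiagonalTuple] at h
    simp [Fin.tail_cons, h.2]
  · intro i hi
    simp [Fin.cons_self_tail]
  · rintro ⟨⟨a, b⟩, x⟩ h
    simp [Fin.prod_univ_succ, Fin.tail_cons]

lemma sum_triangle' (n : ℕ) (f : ℕ → ℕ → ℕ) :
    ∑ k ∈ range (n + 1), ∑ i ∈ range (k + 1), f i (k - i)
      = ∑ i ∈ range (n + 1), ∑ l ∈ range (n + 1 - i), f i l := by
  induction n with
  | zero => simp
  | succ n ih =>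
    rw [Finset.sum_range_succ, ih,
      Finset.sum_range_succ (fun i => ∑ l ∈ range (n + 1 + 1 - i), f i l) (n + 1),
      Finset.sum_range_succ (fun i => f i (n + 1 - i)) (n + 1)]
    have h : ∀ i ∈ range (n + 1),
        ∑ l ∈ range (n + 1 + 1 - i), f i l
          = ∑ l ∈ range (n + 1 - i), f i l + f i (n + 1 - i) := by
      intro i hi
      rw [Finset.mem_range] at hi
      rw [show n + 1 + 1 - i = (n + 1 - i) + 1 by omega, Finset.sum_range_succ]
    rw [Finset.sum_congr rfl h, Finset.sum_add_distrib]
    simp [add_assoc]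

lemma sum_swap' (n : ℕ) (f : ℕ → ℕ → ℕ) :
    ∑ i ∈ range (n + 1), ∑ l ∈ range (n + 1 - i), f i l
      = ∑ l ∈ range (n + 1), ∑ i ∈ range (n + 1 - l), f i l := by
  rw [← sum_triangle' n f, ← sum_triangle' n fun l i => f i l]
  refine Finset.sum_congr rfl fun k _ => ?_
  rw [← Finset.sum_range_reflect (fun i => f i (k - i)) (k + 1)]
  refine Finset.sum_congr rfl fun i hi => ?_
  rw [Finset.mem_range] at hi
  congr 1 <;> omega -- reflect index fix

lemma centralBinom_step (n : ℕ) :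
    Nat.centralBinom (n + 1) + 2 * catalan n = 4 * Nat.centralBinom n := by
  have h1 := Nat.succ_mul_centralBinom_succ n
  have h2 := succ_mul_catalan_eq_centralBinom n
  apply Nat.eq_of_mul_eq_mul_left (show 0 < n + 1 by omega)
  calc (n + 1) * (Nat.centralBinom (n + 1) + 2 * catalan n)
      = (n + 1) * Nat.centralBinom (n + 1) + 2 * ((n + 1) * catalan n) := by ring
    _ = 2 * (2 * n + 1) * Nat.centralBinom n + 2 * Nat.centralBinom n := by rw [h1, h2]
    _ = (n + 1) * (4 * Nat.centralBinom n) := by ring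

lemma two_mul_D (n : ℕ) :
    2 * ∑ k ∈ range (n + 1), catalan k * Nat.centralBinom (n - k)
      = Nat.centralBinom (n + 1) := by
  induction n using Nat.strong_induction_on with
  | _ n ih =>
    match n with
    | 0 => simp [Nat.centralBinom]
    | n + 1 =>
      have e1 : ∑ k ∈ range (n + 1 + 1), catalan k * Nat.centralBinom (n + 1 - k)
          = ∑ k ∈ range (n + 1), catalan (k + 1) * Nat.centralBinom (n - k)
            + Nat.centralBinom (n + 1) := by
        rw [Finset.sum_range_succ' (fun k => catalan k * Nat.centralBinom (n + 1 - k)) (n + 1)]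
        simp
      have e2 : ∑ k ∈ range (n + 1), catalan (k + 1) * Nat.centralBinom (n - k)
          = ∑ i ∈ range (n + 1), catalan i *
              ∑ l ∈ range (n + 1 - i), catalan l * Nat.centralBinom (n - i - l) := by
        have step : ∀ k ∈ range (n + 1),
            catalan (k + 1) * Nat.centralBinom (n - k)
              = ∑ i ∈ range (k + 1),
                  catalan i * (catalan (k - i) * Nat.centralBinom (n - i - (k - i))) := by
          intro k hk
          rw [Finset.mem_range] at hk
          rw [catalan_succ,
            Fin.sum_univ_eq_sum_range (fun i => catalan i * catalan (k - i)) (k + 1),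
            Finset.sum_mul]
          refine Finset.sum_congr rfl fun i hi => ?_
          rw [Finset.mem_range] at hi
          rw [show n - i - (k - i) = n - k by omega, mul_assoc]
        rw [Finset.sum_congr rfl step,
          sum_triangle' n (fun i l => catalan i * (catalan l * Nat.centralBinom (n - i - l)))]
        simp [Finset.mul_sum]
      have e3 : ∀ i ∈ range (n + 1),
          catalan i * ∑ l ∈ range (n + 1 - i), catalan l * Nat.centralBinom (n - i - l)
            = catalan i * (∑ l ∈ range ((n - i) + 1), catalan l * Nat.centralBinom ((n - i) - l)) := by
        intro i hi
        rw [Finset.mem_range] at hi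
        rw [show n + 1 - i = (n - i) + 1 from by omega]
      have hD1 : ∑ k ∈ range (n + 1 + 1), catalan k * Nat.centralBinom (n + 1 - k)
          = (∑ i ∈ range (n + 1), catalan i *
              (∑ l ∈ range ((n - i) + 1), catalan l * Nat.centralBinom ((n - i) - l)))
            + Nat.centralBinom (n + 1) := by
        rw [e1, e2, Finset.sum_congr rfl e3]
      have key : 2 * ∑ i ∈ range (n + 1), catalan i *
            (∑ l ∈ range ((n - i) + 1), catalan l * Nat.centralBinom ((n - i) - l))
          = ∑ i ∈ range (n + 1), catalan i * Nat.centralBinom (n + 1 - i) := by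
        rw [Finset.mul_sum]
        refine Finset.sum_congr rfl fun i hi => ?_
        rw [Finset.mem_range] at hi
        rw [← mul_assoc, mul_comm 2 (catalan i), mul_assoc, ih (n - i) (by omega)]
        congr 2
        omega
      have hD2 : ∑ k ∈ range (n + 1 + 1), catalan k * Nat.centralBinom (n + 1 - k)
          = ∑ i ∈ range (n + 1), catalan i * Nat.centralBinom (n + 1 - i)
            + catalan (n + 1) := by
        rw [Finset.sum_range_succ]
        simp [Nat.centralBinom]
      have hb := centralBinom_step (n + 1)
      omega

def wA (n : ℕ) : ℕ := ∑ m ∈ range (n + 1), 2 ^ m * catConv m (n - m)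

lemma wA_succ (n : ℕ) :
    wA (n + 1) = 2 * ∑ j ∈ range (n + 1), catalan j * wA (n - j) := by
  rw [wA, Finset.sum_range_succ' (fun m => 2 ^ m * catConv m (n + 1 - m)) (n + 1)]
  have h0 : 2 ^ 0 * catConv 0 (n + 1 - 0) = 0 := by
    simp [catConv]
  rw [h0, add_zero]
  have e1 : ∀ m ∈ range (n + 1),
      2 ^ (m + 1) * catConv (m + 1) (n + 1 - (m + 1))
        = ∑ j ∈ range (n + 1 - m), 2 ^ (m + 1) * (catalan j * catConv m (n - m - j)) := by
    intro m hm
    rw [Finset.mem_range] at hm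
    rw [show n + 1 - (m + 1) = n - m from by omega, catConv_succ,
      show (n - m) + 1 = n + 1 - m from by omega, Finset.mul_sum]
  rw [Finset.sum_congr rfl e1,
    sum_swap' n (fun m j => 2 ^ (m + 1) * (catalan j * catConv m (n - m - j))),
    Finset.mul_sum]
  refine Finset.sum_congr rfl fun j hj => ?_
  rw [Finset.mem_range] at hj
  rw [wA, Finset.mul_sum, Finset.mul_sum,
    show (n - j) + 1 = n + 1 - j from by omega]
  refine Finset.sum_congr rfl fun m hm => ?_
  rw [Finset.mem_range] at hm
  rw [show n - j - m = n - m - j from by omega]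
  ring

lemma wA_eq (n : ℕ) : wA n = Nat.centralBinom n := by
  induction n using Nat.strong_induction_on with
  | _ n ih =>
    match n with
    | 0 => simp [wA, catConv, Nat.centralBinom]
    | n + 1 =>
      rw [wA_succ, ← two_mul_D n]
      congr 1
      refine Finset.sum_congr rfl fun j hj => ?_
      rw [Finset.mem_range] at hj
      rw [ih (n - j) (by omega)]

/-- For every `n ≥ 1`,
`∑_{m=1}^{n} 2^m ∑_{i_1,…,i_m ≥ 0, i_1+…+i_m = n-m} C_{i_1} ⋯ C_{i_m} = (2n choose n)`,
the central binomial coefficient (the weighted Catalan convolution at `q = 1`). -/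
theorem weighted_catalan_convolution_at_one (n : ℕ) (hn : 1 ≤ n) :
    (∑ m ∈ Finset.Icc 1 n, 2 ^ m * catConv m (n - m)) = (2 * n).choose n := by
  obtain ⟨k, rfl⟩ : ∃ k, n = k + 1 := ⟨n - 1, by omega⟩
  have h := wA_eq (k + 1)
  rw [wA, Finset.sum_range_succ' (fun m => 2 ^ m * catConv m (k + 1 - m)) (k + 1)] at h
  have h0 : 2 ^ 0 * catConv 0 (k + 1 - 0) = 0 := by simp [catConv]
  rw [h0, add_zero] at h
  have hIcc : ∑ m ∈ Finset.Icc 1 (k + 1), 2 ^ m * catConv m (k + 1 - m)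
      = ∑ i ∈ range (k + 1), 2 ^ (i + 1) * catConv (i + 1) (k + 1 - (i + 1)) := by
    rw [← Finset.Ico_add_one_right_eq_Icc, Finset.sum_Ico_eq_sum_range,
      show k + 1 + 1 - 1 = k + 1 from rfl]
    exact Finset.sum_congr rfl fun i _ => by rw [add_comm 1 i]
  rw [hIcc, h, Nat.centralBinom]
end

section
/- For every real x with |x| < 1/4, the series Σ_{n=1}^{∞} C_{n-1} x^n converges and √(1 - 4x) = 1 - 2 · Σ_{n=1}^{∞} C_{n-1} x^n. -/
open Finset

private lemma centralBinom_le_four_pow_real (m : ℕ) : (Nat.centralBinom m : ℝ) ≤ 4 ^ m := by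
  induction m with
  | zero => simp [Nat.centralBinom]
  | succ k ih =>
    have hk := congrArg (Nat.cast (R := ℝ)) (Nat.succ_mul_centralBinom_succ k)
    push_cast at hk
    have hbpos : (0 : ℝ) < (k : ℝ) + 1 := by positivity
    have h : ((k : ℝ) + 1) * (Nat.centralBinom (k + 1) : ℝ)
        ≤ ((k : ℝ) + 1) * (4 * 4 ^ k) := by
      rw [hk]
      nlinarith [show (0:ℝ) ≤ (Nat.centralBinom k : ℝ) from by positivity]
    have := le_of_mul_le_mul_left h hbpos
    calc (Nat.centralBinom (k + 1) : ℝ) ≤ 4 * 4 ^ k := this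
      _ = 4 ^ (k + 1) := by ring

private lemma catalan_le_four_pow_real (n : ℕ) : (catalan n : ℝ) ≤ 4 ^ n := by
  have h1 : (catalan n : ℝ) ≤ (Nat.centralBinom n : ℝ) := by
    have h := congrArg (Nat.cast (R := ℝ)) (succ_mul_catalan_eq_centralBinom n)
    push_cast at h
    nlinarith [show (0:ℝ) ≤ (catalan n : ℝ) from by positivity,
      show (0:ℝ) ≤ (n : ℝ) from by positivity]
  exact h1.trans (centralBinom_le_four_pow_real n)

/-- Telescoping identity for Catalan numbers at `x = 1/4`. -/
private lemma catalan_telescope (i : ℕ) :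
    (catalan i : ℝ) * (1 / 4) ^ (i + 1)
      = (Nat.centralBinom i : ℝ) / (2 * 4 ^ i)
        - (Nat.centralBinom (i + 1) : ℝ) / (2 * 4 ^ (i + 1)) := by
  have h1 := congrArg (Nat.cast (R := ℝ)) (succ_mul_catalan_eq_centralBinom i)
  have h2 := congrArg (Nat.cast (R := ℝ)) (Nat.succ_mul_centralBinom_succ i)
  push_cast at h1 h2
  have hi : ((i : ℝ) + 1) ≠ 0 := by positivity
  have key : 2 * (catalan i : ℝ)
      = 4 * (Nat.centralBinom i : ℝ) - (Nat.centralBinom (i + 1) : ℝ) := by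
    apply mul_left_cancel₀ hi
    linear_combination 2 * h1 + h2
  have h4 : ((4 : ℝ) ^ i) ≠ 0 := by positivity
  rw [one_div_pow, pow_succ]
  field_simp
  linear_combination key

private lemma catalan_quarter_partial (n : ℕ) :
    ∑ i ∈ range n, (catalan i : ℝ) * (1 / 4) ^ (i + 1) ≤ 1 / 2 := by
  have h : ∑ i ∈ range n, (catalan i : ℝ) * (1 / 4) ^ (i + 1)
      = (Nat.centralBinom 0 : ℝ) / (2 * 4 ^ 0)
        - (Nat.centralBinom n : ℝ) / (2 * 4 ^ n) := by
    rw [← Finset.sum_range_sub' (fun i => (Nat.centralBinom i : ℝ) / (2 * 4 ^ i)) n]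
    exact Finset.sum_congr rfl fun i _ => catalan_telescope i
  rw [h, Nat.centralBinom_zero]
  have hb : (0 : ℝ) ≤ (Nat.centralBinom n : ℝ) / (2 * 4 ^ n) := by positivity
  norm_num
  linarith

/-- For `|x| < 1/4`, the series `∑_{n=1}^{∞} C_{n-1} x^n` converges and
`√(1 - 4x) = 1 - 2 ∑_{n=1}^{∞} C_{n-1} x^n`. -/
theorem sqrt_one_sub_four_mul_eq_catalan_series (x : ℝ) (hx : |x| < 1 / 4) :
    Summable (fun n : ℕ => (catalan n : ℝ) * x ^ (n + 1)) ∧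
    Real.sqrt (1 - 4 * x) = 1 - 2 * ∑' n : ℕ, (catalan n : ℝ) * x ^ (n + 1) := by
  set f : ℕ → ℝ := fun n => (catalan n : ℝ) * x ^ (n + 1) with hf
  have hxle : |x| ≤ 1 / 4 := hx.le
  have habs : ∀ n : ℕ, |f n| = (catalan n : ℝ) * |x| ^ (n + 1) := by
    intro n
    simp only [hf, abs_mul, abs_pow, Nat.abs_cast]
  have habs_le : ∀ n : ℕ, |f n| ≤ (catalan n : ℝ) * (1 / 4) ^ (n + 1) := by
    intro n
    rw [habs n]
    exact mul_le_mul_of_nonneg_left (pow_le_pow_left₀ (abs_nonneg x) hxle _) (by positivity)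
  -- summability via comparison with geometric series
  have hsumnorm : Summable fun n : ℕ => ‖f n‖ := by
    refine Summable.of_nonneg_of_le (f := fun n : ℕ => (1 / 4 : ℝ) * (4 * |x|) ^ n)
      (fun n => norm_nonneg _) ?_ ?_
    · intro n
      show |f n| ≤ _
      rw [habs n]
      calc (catalan n : ℝ) * |x| ^ (n + 1)
          ≤ (4:ℝ) ^ n * |x| ^ (n + 1) :=
            mul_le_mul_of_nonneg_right (catalan_le_four_pow_real n) (by positivity)
        _ = |x| * (4 * |x|) ^ n := by rw [mul_pow, pow_succ]; ring
        _ ≤ (1 / 4) * (4 * |x|) ^ n :=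
            mul_le_mul_of_nonneg_right hxle (by positivity)
    · exact Summable.mul_left _
        (summable_geometric_of_lt_one (by positivity) (by linarith))
  have hsum : Summable f := hsumnorm.of_norm
  refine ⟨hsum, ?_⟩
  set S : ℝ := ∑' n : ℕ, f n with hS
  -- Cauchy product: S * S = S - x
  have hcauchy : S * S = S - x := by
    have h := tsum_mul_tsum_eq_tsum_sum_antidiagonal_of_summable_norm hsumnorm hsumnorm
    have hinner : ∀ n : ℕ, ∑ kl ∈ antidiagonal n, f kl.1 * f kl.2 = f (n + 1) := by
      intro n
      have hterm : ∀ kl ∈ antidiagonal n, f kl.1 * f kl.2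
          = ((catalan kl.1 * catalan kl.2 : ℕ) : ℝ) * x ^ (n + 2) := by
        intro kl hkl
        have hkl' : kl.1 + kl.2 = n := Finset.HasAntidiagonal.mem_antidiagonal.mp hkl
        push_cast
        simp only [hf]
        rw [← hkl']
        ring
      rw [Finset.sum_congr rfl hterm, ← Finset.sum_mul, ← Nat.cast_sum, ← catalan_succ' n]
    rw [tsum_congr hinner] at h
    have hshift : ∑' n : ℕ, f n = f 0 + ∑' n : ℕ, f (n + 1) := Summable.tsum_eq_zero_add hsum
    have hf0 : f 0 = x := by simp [hf]
    rw [← hS] at h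
    rw [← hS, hf0] at hshift
    rw [h]
    linarith
  -- quarter series summable and ≤ 1/2
  have hq : Summable fun n : ℕ => (catalan n : ℝ) * (1 / 4) ^ (n + 1) :=
    summable_of_sum_range_le (fun n => by positivity) catalan_quarter_partial
  have hS_le : S ≤ 1 / 2 := by
    have h1 : S ≤ ∑' n : ℕ, |f n| :=
      Summable.tsum_le_tsum (fun n => le_abs_self _) hsum (by simpa [Real.norm_eq_abs] using hsumnorm)
    have h2 : ∑' n : ℕ, |f n| ≤ ∑' n : ℕ, (catalan n : ℝ) * (1 / 4) ^ (n + 1) :=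
      Summable.tsum_le_tsum habs_le (by simpa [Real.norm_eq_abs] using hsumnorm) hq
    have h3 : ∑' n : ℕ, (catalan n : ℝ) * (1 / 4) ^ (n + 1) ≤ 1 / 2 :=
      Real.tsum_le_of_sum_range_le (fun n => by positivity) catalan_quarter_partial
    linarith
  have hsq : 1 - 4 * x = (1 - 2 * S) ^ 2 := by linear_combination -4 * hcauchy
  rw [hsq, Real.sqrt_sq (by linarith)]
end
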